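/- arXiv:2010.09627 — 8 statements merged into one kernel-verified Lean document; each statement's English description precedes it below -/
import Mathlib

section
/- Let Y be a real random variable with all moments finite, (Y_k) i.i.d. copies, S_n = Y_1 + ... + Y_n, and S_Y(j,m) = (1/m!) ∑_{k=0}^{m} C(m,k)(-1)^{m-k} E[S_k^j]. Then for every n and j, E[S_n^j] = ∑_{m=0}^{min(n,j)} S_Y(j,m) · (n)_m, where (n)_m = n(n-1)···(n-m+1) is the falling factorial. -/
open MeasureTheory ProbabilityTheory Finset fwdDiff

/-!
Write `F j k = E[S_k^j]`. Expanding `S_{k+1}^j = (S_k + Y_k)^j` binomially and using that `Y_k`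
is independent of `S_k` and distributed as `Y_0`, the forward difference `Δ (F j)` is a linear
combination of the `F t` with `t < j`; hence every forward difference of `F j` of order `m > j`
vanishes, i.e. `k ↦ E[S_k^j]` is a polynomial of degree at most `j`. The identity is then the
Gregory–Newton expansion `F j n = ∑ₘ C(n, m) Δᵐ (F j) 0`, in which `C(n, m) = (n)ₘ / m!` and
`Δᵐ (F j) 0 = ∑ₖ C(m, k) (-1)^(m-k) E[S_k^j] = m! S_Y(j, m)`.
-/

section FwdDiff

variable {M G : Type*} [AddCommMonoid M] [AddCommGroup G]

theorem fwdDiff_iter_eq_zero_of_fwdDiff_eq_sum {R : Type*} [Monoid R] [DistribMulAction R G]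
    (h : M) (f : ℕ → M → G) (c : ℕ → ℕ → R)
    (hf : ∀ j, Δ_[h] (f j) = ∑ t ∈ range j, c j t • f t) {j n : ℕ} (hjn : j < n) :
    (Δ_[h])^[n] (f j) = 0 := by
  induction n generalizing j with
  | zero => omega
  | succ n ih =>
    rw [Function.iterate_succ_apply, hf, fwdDiff_iter_finsetSum]
    refine sum_eq_zero fun t ht => ?_
    rw [fwdDiff_iter_const_smul, ih (by have := mem_range.1 ht; omega), smul_zero]

theorem eq_sum_choose_fwdDiff_iter_of_fwdDiff_iter_eq_zero (f : ℕ → G) {d : ℕ}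
    (hf : ∀ m, d < m → (Δ_[1])^[m] f 0 = 0) (n : ℕ) :
    f n = ∑ m ∈ range (min n d + 1), n.choose m • (Δ_[1])^[m] f 0 := by
  have newton := shift_eq_sum_fwdDiff_iter 1 f n 0
  rw [zero_add, smul_eq_mul, mul_one] at newton
  rw [newton]
  rcases le_total n d with hnd | hdn
  · rw [min_eq_left hnd]
  · rw [min_eq_right hdn]
    refine (sum_subset (range_subset_range.2 (by omega)) fun m _ hm => ?_).symm
    rw [hf m (by simpa using hm), smul_zero]

theorem fwdDiff_iter_apply_zero_eq_sum {R : Type*} [Ring R] (f : ℕ → R) (m : ℕ) :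
    (Δ_[1])^[m] f 0 = ∑ k ∈ range (m + 1), (m.choose k : R) * (-1) ^ (m - k) * f k := by
  rw [fwdDiff_iter_eq_sum_shift]
  refine sum_congr rfl fun k _ => ?_
  rw [zero_add, smul_eq_mul, mul_one, zsmul_eq_mul]
  push_cast
  rw [Nat.cast_comm]

end FwdDiff

section Moments

variable {Ω : Type*} [MeasurableSpace Ω] {μ : Measure Ω}

theorem memLp_of_integrable_abs_pow {f : Ω → ℝ} (hf : AEStronglyMeasurable f μ) {p : ℕ}
    (h : Integrable (fun ω => |f ω| ^ p) μ) : MemLp f p μ := by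
  rcases eq_or_ne p 0 with rfl | hp
  · simpa using memLp_zero_iff_aestronglyMeasurable.2 hf
  · refine (integrable_norm_rpow_iff hf (by simpa) (by simp)).1 ?_
    simpa using h

theorem integrable_pow_of_memLp [IsFiniteMeasure μ] {f : Ω → ℝ} {p : ℕ} (hf : MemLp f p μ) :
    Integrable (fun ω => f ω ^ p) μ := by
  refine (integrable_norm_iff (hf.aestronglyMeasurable.pow p)).1 ?_
  simpa only [Pi.pow_apply, norm_pow] using hf.integrable_norm_pow'

variable {Y : ℕ → Ω → ℝ}

theorem memLp_sum_range_of_identDistrib (hmeas : ∀ i, Measurable (Y i))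
    (hident : ∀ i, IdentDistrib (Y i) (Y 0) μ μ)
    (hmom : ∀ j : ℕ, Integrable (fun ω => |Y 0 ω| ^ j) μ) (k p : ℕ) :
    MemLp (fun ω => ∑ i ∈ range k, Y i ω) p μ :=
  memLp_finsetSum _ fun i _ =>
    (hident i).symm.memLp_snd (memLp_of_integrable_abs_pow (hmeas 0).aestronglyMeasurable (hmom p))

theorem integral_sum_range_succ_pow [IsProbabilityMeasure μ] (hmeas : ∀ i, Measurable (Y i))
    (hindep : iIndepFun Y μ) (hident : ∀ i, IdentDistrib (Y i) (Y 0) μ μ)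
    (hmom : ∀ j : ℕ, Integrable (fun ω => |Y 0 ω| ^ j) μ) (k j : ℕ) :
    ∫ ω, (∑ i ∈ range (k + 1), Y i ω) ^ j ∂μ
      = ∑ t ∈ range (j + 1), (j.choose t * ∫ ω, Y 0 ω ^ (j - t) ∂μ) *
          ∫ ω, (∑ i ∈ range k, Y i ω) ^ t ∂μ := by
  have hindep_pow (s t : ℕ) :
      IndepFun (fun ω => (∑ i ∈ range k, Y i ω) ^ s) (fun ω => Y k ω ^ t) μ := by
    have := (hindep.indepFun_sum_range_succ hmeas k).comp (measurable_id.pow_const s)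
      (measurable_id.pow_const t)
    convert this using 2 with ω <;> simp
  have hS (s : ℕ) :=
    integrable_pow_of_memLp (memLp_sum_range_of_identDistrib hmeas hident hmom k s)
  have hY (t : ℕ) := integrable_pow_of_memLp ((hident k).symm.memLp_snd
    (memLp_of_integrable_abs_pow (hmeas 0).aestronglyMeasurable (hmom t)))
  have hmoment (s : ℕ) : ∫ ω, Y k ω ^ s ∂μ = ∫ ω, Y 0 ω ^ s ∂μ :=
    ((hident k).comp (measurable_id.pow_const s)).integral_eq
  simp_rw [sum_range_succ _ k, add_pow]
  rw [integral_finsetSum _ fun t _ => ?_]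
  · refine sum_congr rfl fun t _ => ?_
    rw [integral_mul_const, (hindep_pow t _).integral_fun_mul_eq_mul_integral (hS t).1 (hY _).1,
      hmoment]
    ring
  · exact ((hindep_pow t _).integrable_mul (hS t) (hY _)).mul_const _

theorem fwdDiff_integral_sum_range_pow [IsProbabilityMeasure μ] (hmeas : ∀ i, Measurable (Y i))
    (hindep : iIndepFun Y μ) (hident : ∀ i, IdentDistrib (Y i) (Y 0) μ μ)
    (hmom : ∀ j : ℕ, Integrable (fun ω => |Y 0 ω| ^ j) μ) (j : ℕ) :
    Δ_[1] (fun k => ∫ ω, (∑ i ∈ range k, Y i ω) ^ j ∂μ)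
      = ∑ t ∈ range j, (j.choose t * ∫ ω, Y 0 ω ^ (j - t) ∂μ) •
          fun k => ∫ ω, (∑ i ∈ range k, Y i ω) ^ t ∂μ := by
  ext k
  rw [fwdDiff, integral_sum_range_succ_pow hmeas hindep hident hmom, sum_range_succ]
  simp

end Moments

/-- `E[S_n^j] = ∑_{m=0}^{min(n,j)} S_Y(j,m) (n)_m` for partial sums `S_n` of i.i.d.
copies of `Y` with all moments finite, where
`S_Y(j,m) = (1/m!) ∑_{k=0}^m C(m,k)(-1)^{m-k} E[S_k^j]` and `(n)_m` is the falling
factorial. -/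
theorem stmt_5 {Ω : Type*} [MeasurableSpace Ω] (μ : Measure Ω) [IsProbabilityMeasure μ]
    (Y : ℕ → Ω → ℝ) (hmeas : ∀ i, Measurable (Y i))
    (hindep : iIndepFun Y μ)
    (hident : ∀ i, IdentDistrib (Y i) (Y 0) μ μ)
    (hmom : ∀ j : ℕ, Integrable (fun ω => |Y 0 ω| ^ j) μ)
    (n j : ℕ) :
    ∫ ω, (∑ i ∈ Finset.range n, Y i ω) ^ j ∂μ
      = ∑ m ∈ Finset.range (min n j + 1),
          ((m.factorial : ℝ)⁻¹ * ∑ k ∈ Finset.range (m + 1),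
              (m.choose k : ℝ) * (-1) ^ (m - k) *
                ∫ ω, (∑ i ∈ Finset.range k, Y i ω) ^ j ∂μ)
            * (n.descFactorial m : ℝ) := by
  let F : ℕ → ℝ := fun k => ∫ ω, (∑ i ∈ range k, Y i ω) ^ j ∂μ
  have hvanish (m : ℕ) (hm : j < m) : (Δ_[1])^[m] F 0 = 0 :=
    congrFun (fwdDiff_iter_eq_zero_of_fwdDiff_eq_sum 1 _ _
      (fwdDiff_integral_sum_range_pow hmeas hindep hident hmom) hm) 0
  refine (eq_sum_choose_fwdDiff_iter_of_fwdDiff_iter_eq_zero F hvanish n).trans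
    (sum_congr rfl fun m _ => ?_)
  rw [fwdDiff_iter_apply_zero_eq_sum, nsmul_eq_mul, Nat.descFactorial_eq_factorial_mul_choose]
  push_cast
  field_simp
  rfl
end

section
/- Let Y be a real random variable with E[Y^k] = 0 for k = 1, ..., r (r ≥ 0) and all moments finite, let (Y_k) be i.i.d. copies with partial sums S_k, and set S_Y(j,m) = (1/m!) ∑_{k=0}^{m} C(m,k)(-1)^{m-k} E[S_k^j]. Then S_Y(j,m) = 0 whenever j < m(r+1). -/
/-!
Write `g n k = E[S_k^n]`. Expanding `S_{k+1}^n = (S_k + Y_k)^n` binomially and using the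
independence of `S_k` and `Y_k` gives
`Δ g n = ∑_{i<n} C(n,i) E[Y^{n-i}] g i`, and the centering kills every term with
`n - i ≤ r`. So each forward difference lowers the moment index by at least `r + 1`, and
`Δ^m g j = 0` once `j < m(r+1)`. The Stirling number `S_Y(j,m)` is `(1/m!) (Δ^m g j)(0)`.
-/

open MeasureTheory ProbabilityTheory Finset
open fwdDiff

section ForwardDifference

variable {M G R : Type*} [AddCommMonoid M] [AddCommGroup G] [Semiring R] [Module R G]

theorem fwdDiff_iter_eq_zero_of_fwdDiff_eq_sum_of_gap (h : M) (r : ℕ) {g : ℕ → M → G}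
    {c : ℕ → ℕ → R} (hg : ∀ n, Δ_[h] (g n) = ∑ i ∈ range n, c n i • g i)
    (hc : ∀ n i, i < n → n ≤ i + r → c n i = 0) {m n : ℕ} (hn : n < m * (r + 1)) :
    (Δ_[h])^[m] (g n) = 0 := by
  induction m generalizing n with
  | zero => simp at hn
  | succ m ih =>
    rw [Function.iterate_succ_apply, hg, fwdDiff_iter_finsetSum]
    refine sum_eq_zero fun i hi => ?_
    have hin := mem_range.mp hi
    rw [fwdDiff_iter_const_smul]
    by_cases hgap : n ≤ i + r
    · rw [hc n i hin hgap, zero_smul]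
    · rw [ih (by rw [Nat.succ_mul] at hn; omega), smul_zero]

end ForwardDifference

theorem pow_sum_range_succ_eq_sum {Ω : Type*} (Y : ℕ → Ω → ℝ) (k n : ℕ) (ω : Ω) :
    (∑ i ∈ range (k + 1), Y i ω) ^ n =
      ∑ u ∈ range (n + 1), (∑ i ∈ range k, Y i ω) ^ u * Y k ω ^ (n - u) * (n.choose u : ℝ) := by
  rw [sum_range_succ, add_pow]

namespace ProbabilityTheory

variable {Ω : Type*} [MeasurableSpace Ω] {μ : Measure Ω} {Y : ℕ → Ω → ℝ}

theorem iIndepFun.indepFun_pow_sum_range_pow (hmeas : ∀ i, Measurable (Y i))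
    (hindep : iIndepFun Y μ) (k t u : ℕ) :
    IndepFun (fun ω => (∑ i ∈ range k, Y i ω) ^ t) (fun ω => Y k ω ^ u) μ := by
  have hsum : IndepFun (fun ω => ∑ i ∈ range k, Y i ω) (Y k) μ := by
    simpa only [← Finset.sum_apply] using hindep.indepFun_sum_range_succ hmeas k
  exact hsum.comp (measurable_id.pow_const t) (measurable_id.pow_const u)

theorem iIndepFun.integrable_pow_sum_range [IsFiniteMeasure μ] (hmeas : ∀ i, Measurable (Y i))
    (hindep : iIndepFun Y μ) (hint : ∀ i t, Integrable (fun ω => Y i ω ^ t) μ) (k t : ℕ) :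
    Integrable (fun ω => (∑ i ∈ range k, Y i ω) ^ t) μ := by
  induction k generalizing t with
  | zero => simp
  | succ k ih =>
    simp_rw [pow_sum_range_succ_eq_sum]
    exact integrable_finsetSum _ fun u _ =>
      ((hindep.indepFun_pow_sum_range_pow hmeas k u (t - u)).integrable_mul
        (ih u) (hint k (t - u))).mul_const _

theorem iIndepFun.integral_pow_sum_range_succ [IsFiniteMeasure μ]
    (hmeas : ∀ i, Measurable (Y i)) (hindep : iIndepFun Y μ)
    (hint : ∀ i t, Integrable (fun ω => Y i ω ^ t) μ) (k n : ℕ) :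
    ∫ ω, (∑ i ∈ range (k + 1), Y i ω) ^ n ∂μ =
      ∑ u ∈ range (n + 1), (n.choose u : ℝ) * (∫ ω, (∑ i ∈ range k, Y i ω) ^ u ∂μ) *
        ∫ ω, Y k ω ^ (n - u) ∂μ := by
  have hindepPow := hindep.indepFun_pow_sum_range_pow hmeas k
  have hSint := hindep.integrable_pow_sum_range hmeas hint k
  simp_rw [pow_sum_range_succ_eq_sum]
  rw [integral_finsetSum _ fun u _ => ?_]
  · refine sum_congr rfl fun u _ => ?_
    rw [integral_mul_const, (hindepPow u (n - u)).integral_fun_mul_eq_mul_integral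
      (hSint u).aestronglyMeasurable (hint k (n - u)).aestronglyMeasurable]
    ring
  · exact ((hindepPow u (n - u)).integrable_mul (hSint u) (hint k (n - u))).mul_const _

theorem iIndepFun.fwdDiff_integral_pow_sum_range [IsProbabilityMeasure μ]
    (hmeas : ∀ i, Measurable (Y i)) (hindep : iIndepFun Y μ)
    (hident : ∀ i, IdentDistrib (Y i) (Y 0) μ μ)
    (hint : ∀ i t, Integrable (fun ω => Y i ω ^ t) μ) (n : ℕ) :
    Δ_[1] (fun k => ∫ ω, (∑ i ∈ range k, Y i ω) ^ n ∂μ) =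
      ∑ i ∈ range n, ((n.choose i : ℝ) * ∫ ω, Y 0 ω ^ (n - i) ∂μ) •
        fun k => ∫ ω, (∑ i' ∈ range k, Y i' ω) ^ i ∂μ := by
  funext k
  have hmoment : ∀ t, ∫ ω, Y k ω ^ t ∂μ = ∫ ω, Y 0 ω ^ t ∂μ := fun t =>
    ((hident k).comp (measurable_id.pow_const t)).integral_eq
  rw [fwdDiff, hindep.integral_pow_sum_range_succ hmeas hint, sum_range_succ]
  simp only [hmoment, Nat.choose_self, Nat.sub_self, pow_zero, integral_const, probReal_univ,
    smul_eq_mul, Nat.cast_one, one_mul, mul_one, add_sub_cancel_right, Finset.sum_apply,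
    Pi.smul_apply]
  exact sum_congr rfl fun i _ => by ring

end ProbabilityTheory

/-- If `E[Y^k] = 0` for `k = 1,…,r` and all moments are finite, then the probabilistic
Stirling number `S_Y(j,m) = (1/m!) ∑_{k=0}^m C(m,k)(-1)^{m-k} E[S_k^j]` vanishes
whenever `j < m(r+1)`. -/
theorem stmt_8 {Ω : Type*} [MeasurableSpace Ω] (μ : Measure Ω) [IsProbabilityMeasure μ]
    (Y : ℕ → Ω → ℝ) (hmeas : ∀ i, Measurable (Y i))
    (hindep : iIndepFun Y μ)
    (hident : ∀ i, IdentDistrib (Y i) (Y 0) μ μ)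
    (hmom : ∀ j : ℕ, Integrable (fun ω => |Y 0 ω| ^ j) μ)
    (r : ℕ) (hcent : ∀ k ∈ Finset.Icc 1 r, ∫ ω, (Y 0 ω) ^ k ∂μ = 0)
    (j m : ℕ) (hjm : j < m * (r + 1)) :
    (m.factorial : ℝ)⁻¹ * ∑ k ∈ Finset.range (m + 1), (m.choose k : ℝ) * (-1) ^ (m - k) *
        ∫ ω, (∑ i ∈ Finset.range k, Y i ω) ^ j ∂μ = 0 := by
  have hint : ∀ i t, Integrable (fun ω => Y i ω ^ t) μ := fun i t =>
    ((hident i).comp (measurable_id.pow_const t)).integrable_iff.mpr <|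
      (integrable_norm_iff ((hmeas 0).pow_const t).aestronglyMeasurable).mp
        (by simpa only [norm_pow, Real.norm_eq_abs] using hmom t)
  have hvanish := fwdDiff_iter_eq_zero_of_fwdDiff_eq_sum_of_gap 1 r
    (hindep.fwdDiff_integral_pow_sum_range hmeas hident hint)
    (fun n i hin hgap => by
      rw [hcent (n - i) (mem_Icc.mpr ⟨by omega, by omega⟩), mul_zero]) hjm
  have hsum := congr_fun hvanish 0
  rw [fwdDiff_iter_eq_sum_shift, Pi.zero_apply] at hsum
  rw [← mul_zero (m.factorial : ℝ)⁻¹, ← hsum]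
  congr 1
  refine sum_congr rfl fun k _ => ?_
  simp only [zero_add, smul_eq_mul, mul_one, zsmul_eq_mul]
  push_cast
  ring
end

section
/- Let Y be a real random variable with E[Y] = 0, E[Y^2] = σ² > 0, and all moments finite, and (Y_k) i.i.d. copies with partial sums S_n. Then the probabilistic Stirling number of top index satisfies S_Y(2j, j) = σ^{2j} (2j)!/(j! 2^j), i.e., S_Y(2j,j) equals E[(σZ)^{2j}] for Z standard normal. -/
/-!
Let `Φ(t) = ∑ₙ E[Yⁿ] tⁿ / n!` be the exponential generating function of the moments of `Y`.
It is multiplicative over independent sums, so the series of `S_k` is `Φᵏ`, and by the binomial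
theorem the alternating sum `∑ₖ C(j,k) (-1)^{j-k} E[S_k^{2j}]` is `(2j)!` times the coefficient of
`t^{2j}` in `(Φ - 1)ʲ`. Since `E[1] = 1` and `E[Y] = 0`, `Φ - 1 = t² Ψ` with `Ψ(0) = σ²/2`, so that
coefficient is `(σ²/2)ʲ`.
-/

open MeasureTheory ProbabilityTheory Finset PowerSeries

lemma PowerSeries.coeff_mul_pow_of_X_pow_dvd {R : Type*} [CommSemiring R] {f : R⟦X⟧} {d : ℕ}
    (hf : X ^ d ∣ f) (j : ℕ) : coeff (d * j) (f ^ j) = coeff d f ^ j := by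
  obtain ⟨g, rfl⟩ := hf
  simp [mul_pow, ← pow_mul, coeff_X_pow_mul', ← map_pow]

lemma add_pow_eq_sum_antidiagonal {α : Type*} (X Y : α → ℝ) (n : ℕ) :
    (X + Y) ^ n = ∑ m ∈ antidiagonal n, (n.choose m.1 : ℝ) • (X ^ m.1 * Y ^ m.2) := by
  simp_rw [(Commute.all X Y).add_pow', Nat.cast_smul_eq_nsmul]

namespace ProbabilityTheory

variable {Ω : Type*} [MeasurableSpace Ω] {μ : Measure Ω}

noncomputable def momentEGF (X : Ω → ℝ) (μ : Measure Ω) : PowerSeries ℝ :=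
  PowerSeries.mk fun n => moment X n μ / n.factorial

lemma coeff_momentEGF (X : Ω → ℝ) (μ : Measure Ω) (n : ℕ) :
    coeff n (momentEGF X μ) = moment X n μ / n.factorial :=
  coeff_mk _ _

lemma moment_eq_factorial_mul_coeff_momentEGF (X : Ω → ℝ) (μ : Measure Ω) (n : ℕ) :
    moment X n μ = n.factorial * coeff n (momentEGF X μ) := by
  rw [coeff_momentEGF, mul_div_cancel₀ _ (by positivity)]

lemma IdentDistrib.momentEGF_eq {Ω' : Type*} [MeasurableSpace Ω'] {μ' : Measure Ω'}
    {X : Ω → ℝ} {X' : Ω' → ℝ} (h : IdentDistrib X X' μ μ') :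
    momentEGF X μ = momentEGF X' μ' := by
  ext n
  simp only [coeff_momentEGF, moment]
  exact congrArg (· / _) (h.comp (measurable_id.pow_const n)).integral_eq

section TwoVariables

variable {X Y : Ω → ℝ}

lemma IndepFun.integrable_pow_mul_pow (hXY : IndepFun X Y μ) {a b : ℕ}
    (hX : Integrable (X ^ a) μ) (hY : Integrable (Y ^ b) μ) :
    Integrable (X ^ a * Y ^ b) μ :=
  (hXY.comp (measurable_id.pow_const a) (measurable_id.pow_const b)).integrable_mul hX hY

lemma IndepFun.integral_pow_mul_pow (hXY : IndepFun X Y μ) {a b : ℕ}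
    (hX : Integrable (X ^ a) μ) (hY : Integrable (Y ^ b) μ) :
    μ[X ^ a * Y ^ b] = moment X a μ * moment Y b μ :=
  (hXY.comp (measurable_id.pow_const a) (measurable_id.pow_const b)).integral_mul_eq_mul_integral
    hX.aestronglyMeasurable hY.aestronglyMeasurable

lemma IndepFun.integrable_add_pow (hXY : IndepFun X Y μ) (hX : ∀ n, Integrable (X ^ n) μ)
    (hY : ∀ n, Integrable (Y ^ n) μ) (n : ℕ) : Integrable ((X + Y) ^ n) μ := by
  rw [add_pow_eq_sum_antidiagonal]
  exact integrable_finsetSum' _ fun m _ =>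
    (hXY.integrable_pow_mul_pow (hX _) (hY _)).smul (n.choose m.1 : ℝ)

lemma IndepFun.moment_add (hXY : IndepFun X Y μ) (hX : ∀ n, Integrable (X ^ n) μ)
    (hY : ∀ n, Integrable (Y ^ n) μ) (n : ℕ) :
    moment (X + Y) n μ =
      ∑ m ∈ antidiagonal n, (n.choose m.1 : ℝ) * (moment X m.1 μ * moment Y m.2 μ) := by
  rw [moment_def, add_pow_eq_sum_antidiagonal]
  simp_rw [Finset.sum_apply]
  rw [integral_finsetSum _ fun m _ =>
    (hXY.integrable_pow_mul_pow (hX _) (hY _)).smul (n.choose m.1 : ℝ)]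
  refine sum_congr rfl fun m _ => ?_
  simp only [Pi.smul_apply, smul_eq_mul]
  rw [integral_const_mul, hXY.integral_pow_mul_pow (hX _) (hY _)]

lemma IndepFun.momentEGF_add (hXY : IndepFun X Y μ) (hX : ∀ n, Integrable (X ^ n) μ)
    (hY : ∀ n, Integrable (Y ^ n) μ) :
    momentEGF (X + Y) μ = momentEGF X μ * momentEGF Y μ := by
  ext n
  rw [coeff_mul, coeff_momentEGF, hXY.moment_add hX hY, sum_div]
  refine sum_congr rfl fun ⟨a, b⟩ hab => ?_
  rw [HasAntidiagonal.mem_antidiagonal] at hab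
  subst hab
  rw [coeff_momentEGF, coeff_momentEGF, ← Nat.add_choose_mul_factorial_mul_factorial a b]
  have hchoose : ((a + b).choose b : ℝ) ≠ 0 := by exact_mod_cast (Nat.choose_pos le_add_self).ne'
  dsimp only
  rw [Nat.choose_symm_add, Nat.cast_mul, Nat.cast_mul, mul_assoc, mul_div_mul_left _ _ hchoose,
    div_mul_div_comm]

end TwoVariables

variable [IsProbabilityMeasure μ]

lemma constantCoeff_momentEGF (X : Ω → ℝ) : constantCoeff (momentEGF X μ) = 1 := by
  simp [← coeff_zero_eq_constantCoeff_apply, coeff_momentEGF, moment]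

lemma momentEGF_zero : momentEGF (0 : Ω → ℝ) μ = 1 := by
  ext (_ | n)
  · simp [coeff_momentEGF, moment]
  · simp [coeff_momentEGF, moment_zero]

variable {ι : Type*} {Y : ι → Ω → ℝ}

lemma iIndepFun.integrable_sum_pow (hY : iIndepFun Y μ) (hmeas : ∀ i, Measurable (Y i))
    (hint : ∀ i n, Integrable (Y i ^ n) μ) (s : Finset ι) (n : ℕ) :
    Integrable ((∑ i ∈ s, Y i) ^ n) μ := by
  classical
  induction s using Finset.induction_on generalizing n with
  | empty => exact integrable_const ((0 : ℝ) ^ n)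
  | insert a s ha ih =>
    rw [sum_insert ha]
    exact (hY.indepFun_finsetSum_of_notMem hmeas ha).symm.integrable_add_pow (hint a) ih n

lemma iIndepFun.momentEGF_sum (hY : iIndepFun Y μ) (hmeas : ∀ i, Measurable (Y i))
    (hint : ∀ i n, Integrable (Y i ^ n) μ) (s : Finset ι) :
    momentEGF (∑ i ∈ s, Y i) μ = ∏ i ∈ s, momentEGF (Y i) μ := by
  classical
  induction s using Finset.induction_on with
  | empty => simpa using momentEGF_zero
  | insert a s ha ih =>
    rw [sum_insert ha, prod_insert ha, ← ih]
    exact (hY.indepFun_finsetSum_of_notMem hmeas ha).symm.momentEGF_add (hint a)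
      (hY.integrable_sum_pow hmeas hint s)

end ProbabilityTheory

theorem stmt_9_general {Ω : Type*} [MeasurableSpace Ω] (μ : Measure Ω) [IsProbabilityMeasure μ]
    (Y : ℕ → Ω → ℝ) (hmeas : ∀ i, Measurable (Y i))
    (hindep : iIndepFun Y μ)
    (hident : ∀ i, IdentDistrib (Y i) (Y 0) μ μ)
    (hmom : ∀ j : ℕ, Integrable (fun ω => |Y 0 ω| ^ j) μ)
    (hcent : ∫ ω, Y 0 ω ∂μ = 0)
    (σ : ℝ) (hσ : ∫ ω, (Y 0 ω) ^ 2 ∂μ = σ ^ 2)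
    (j : ℕ) :
    (j.factorial : ℝ)⁻¹ * ∑ k ∈ Finset.range (j + 1), (j.choose k : ℝ) * (-1) ^ (j - k) *
        ∫ ω, (∑ i ∈ Finset.range k, Y i ω) ^ (2 * j) ∂μ
      = σ ^ (2 * j) * ((2 * j).factorial : ℝ) / ((j.factorial : ℝ) * 2 ^ j) := by
  set Φ := momentEGF (Y 0) μ
  have hint : ∀ i n, Integrable (Y i ^ n) μ := fun i n =>
    ((hident i).comp (measurable_id.pow_const n)).integrable_iff.2 <|
      (hmom n).mono' ((hmeas 0).pow_const n).aestronglyMeasurable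
        (ae_of_all _ fun ω => by simp)
  have hsum_moment : ∀ k, ∫ ω, (∑ i ∈ range k, Y i ω) ^ (2 * j) ∂μ =
      (2 * j).factorial * coeff (2 * j) (Φ ^ k) := fun k => by
    calc ∫ ω, (∑ i ∈ range k, Y i ω) ^ (2 * j) ∂μ = moment (∑ i ∈ range k, Y i) (2 * j) μ := by
          simp [moment, Finset.sum_apply]
      _ = _ := by
          rw [moment_eq_factorial_mul_coeff_momentEGF, hindep.momentEGF_sum hmeas hint,
            prod_congr rfl fun i _ => (hident i).momentEGF_eq, prod_const, card_range]
  have hbinom : (Φ - 1) ^ j = ∑ k ∈ range (j + 1), ((j.choose k : ℝ) * (-1) ^ (j - k)) • Φ ^ k := by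
    rw [sub_eq_add_neg, add_pow]
    refine sum_congr rfl fun k _ => ?_
    rw [Algebra.smul_def]
    simp only [map_mul, map_natCast, map_pow, map_neg, map_one]
    ring
  have hdvd : X ^ 2 ∣ Φ - 1 := X_pow_dvd_iff.2 fun m hm => by
    interval_cases m <;> simp [Φ, constantCoeff_momentEGF, coeff_momentEGF, moment, hcent]
  have hcoeff : coeff 2 (Φ - 1) = σ ^ 2 / 2 := by
    simp [Φ, coeff_momentEGF, moment, hσ]
  have halt : ∑ k ∈ range (j + 1), (j.choose k : ℝ) * (-1) ^ (j - k) * coeff (2 * j) (Φ ^ k) =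
      (σ ^ 2 / 2) ^ j := by
    rw [← hcoeff, ← coeff_mul_pow_of_X_pow_dvd hdvd, hbinom, map_sum]
    simp only [map_smul, smul_eq_mul]
  simp_rw [hsum_moment, mul_left_comm _ ((2 * j).factorial : ℝ), ← mul_sum, halt]
  rw [div_pow, ← pow_mul, mul_comm 2 j]
  field_simp

/-- If `E[Y] = 0`, `E[Y²] = σ² > 0` and all moments are finite, then
`S_Y(2j,j) = σ^{2j} (2j)!/(j! 2^j) = E[(σZ)^{2j}]` for `Z` standard normal. -/
theorem stmt_9 {Ω : Type*} [MeasurableSpace Ω] (μ : Measure Ω) [IsProbabilityMeasure μ]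
    (Y : ℕ → Ω → ℝ) (hmeas : ∀ i, Measurable (Y i))
    (hindep : iIndepFun Y μ)
    (hident : ∀ i, IdentDistrib (Y i) (Y 0) μ μ)
    (hmom : ∀ j : ℕ, Integrable (fun ω => |Y 0 ω| ^ j) μ)
    (hcent : ∫ ω, Y 0 ω ∂μ = 0)
    (σ : ℝ) (hσpos : 0 < σ) (hσ : ∫ ω, (Y 0 ω) ^ 2 ∂μ = σ ^ 2)
    (j : ℕ) :
    (j.factorial : ℝ)⁻¹ * ∑ k ∈ Finset.range (j + 1), (j.choose k : ℝ) * (-1) ^ (j - k) *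
        ∫ ω, (∑ i ∈ Finset.range k, Y i ω) ^ (2 * j) ∂μ
      = σ ^ (2 * j) * ((2 * j).factorial : ℝ) / ((j.factorial : ℝ) * 2 ^ j) :=
  stmt_9_general μ Y hmeas hindep hident hmom hcent σ hσ j
end

section
/- Let Y be a real random variable with E[Y] = 0, E[Y^2] = σ², E[Y^3] finite, and all moments finite, with i.i.d. copies and partial sums S_k. Then S_Y(2j+1, j) = j(2j+1) · σ^{2j}(2j)!/(j!2^j) · E[Y^3]/(3σ²), where S_Y(j,m) = (1/m!) ∑_{k=0}^{m} C(m,k)(-1)^{m-k} E[S_k^j]. -/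
/-!
Write `g n k = E[S_k^n]` and `m t = E[Y^t]`. Independence of `S_k` and `Y_k` gives the binomial
recursion `g n (k+1) = ∑ᵢ C(n,i) g i k m (n-i)`. Since `m 0 = 1`, the forward difference in `k`
keeps only the terms with `i < n`, and since `m 1 = 0` it even forces `i ≤ n - 2`. Hence
`Δ^ℓ g n` vanishes for `n < 2ℓ`; on the diagonal `n = 2ℓ` only the factors `m 2 = σ²` survive,
and for `n = 2ℓ+1` exactly one of the `ℓ` steps uses `m 3` instead of `m 2`. Computing these two
extreme coefficients by induction on `ℓ` gives the formula, because `S_Y(2j+1, j)` is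
`(j!)⁻¹ Δ^j g (2j+1)` evaluated at `0`.
-/

open Finset fwdDiff MeasureTheory ProbabilityTheory

def IsWalkMoments {R : Type*} [CommRing R] (m : ℕ → R) (g : ℕ → ℕ → R) : Prop :=
  ∀ n k, g n (k + 1) = ∑ i ∈ range (n + 1), g i k * m (n - i) * n.choose i

namespace IsWalkMoments

variable {R : Type*} [CommRing R] {m : ℕ → R} {g : ℕ → ℕ → R}

theorem fwdDiff_eq_sum (hg : IsWalkMoments m g) (hm0 : m 0 = 1) (n : ℕ) :
    Δ_[1] (g n) = ∑ i ∈ range n, (m (n - i) * n.choose i) • g i := by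
  ext k
  simp only [fwdDiff, hg n k, sum_range_succ, Nat.sub_self, hm0, Nat.choose_self, Nat.cast_one,
    mul_one, add_sub_cancel_right, Finset.sum_apply, Pi.smul_apply, smul_eq_mul]
  exact sum_congr rfl fun i _ => by ring

theorem fwdDiff_iter_succ_eq_sum (hg : IsWalkMoments m g) (hm0 : m 0 = 1) (n ℓ : ℕ) :
    (Δ_[1])^[ℓ + 1] (g n) = ∑ i ∈ range n, (m (n - i) * n.choose i) • (Δ_[1])^[ℓ] (g i) := by
  rw [Function.iterate_succ_apply, hg.fwdDiff_eq_sum hm0, fwdDiff_iter_finsetSum]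
  simp only [fwdDiff_iter_const_smul]

theorem fwdDiff_iter_eq_zero_of_lt (hg : IsWalkMoments m g) (hm0 : m 0 = 1) (hm1 : m 1 = 0)
    {n ℓ : ℕ} (hn : n < 2 * ℓ) : (Δ_[1])^[ℓ] (g n) = 0 := by
  induction ℓ generalizing n with
  | zero => omega
  | succ ℓ ih =>
    rw [hg.fwdDiff_iter_succ_eq_sum hm0]
    refine sum_eq_zero fun i hi => ?_
    rcases lt_or_ge i (2 * ℓ) with h | h
    · rw [ih h, smul_zero]
    · rw [show n - i = 1 by simp only [mem_range] at hi; omega, hm1, zero_mul, zero_smul]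

theorem fwdDiff_iter_succ_eq_sum_Ico (hg : IsWalkMoments m g) (hm0 : m 0 = 1) (hm1 : m 1 = 0)
    (n ℓ : ℕ) :
    (Δ_[1])^[ℓ + 1] (g n) = ∑ i ∈ Ico (2 * ℓ) n, (m (n - i) * n.choose i) • (Δ_[1])^[ℓ] (g i) := by
  rw [hg.fwdDiff_iter_succ_eq_sum hm0]
  refine (sum_subset (fun i hi => ?_) fun i _ hi => ?_).symm
  · simp only [mem_Ico, mem_range] at hi ⊢
    omega
  · simp only [mem_Ico, mem_range, not_and, not_lt] at *
    rw [hg.fwdDiff_iter_eq_zero_of_lt hm0 hm1 (by omega), smul_zero]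

theorem fwdDiff_iter_even (hg : IsWalkMoments m g) (hm0 : m 0 = 1) (hm1 : m 1 = 0)
    (hg00 : g 0 0 = 1) (ℓ : ℕ) :
    (Δ_[1])^[ℓ] (g (2 * ℓ)) 0 * 2 ^ ℓ = (2 * ℓ).factorial * m 2 ^ ℓ := by
  induction ℓ with
  | zero => simp [hg00]
  | succ ℓ ih =>
    have hchoose : ((2 * ℓ + 2).choose (2 * ℓ) * 2 * (2 * ℓ).factorial : R)
        = (2 * ℓ + 2).factorial := by
      have h := Nat.add_choose_mul_factorial_mul_factorial 2 (2 * ℓ)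
      rw [add_comm, Nat.factorial_two] at h
      exact_mod_cast congrArg (Nat.cast : ℕ → R) h
    rw [show 2 * (ℓ + 1) = 2 * ℓ + 2 by ring, hg.fwdDiff_iter_succ_eq_sum_Ico hm0 hm1,
      sum_Ico_succ_top (by omega), sum_Ico_succ_top (by omega), Ico_self]
    simp only [sum_empty, show 2 * ℓ + 2 - (2 * ℓ + 1) = 1 by omega, Nat.add_sub_cancel_left, hm1,
      Pi.add_apply, Pi.smul_apply, smul_eq_mul, zero_mul, zero_add, add_zero]
    linear_combination (2 * m 2 * (2 * ℓ + 2).choose (2 * ℓ)) * ih + m 2 ^ (ℓ + 1) * hchoose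

theorem fwdDiff_iter_odd (hg : IsWalkMoments m g) (hm0 : m 0 = 1) (hm1 : m 1 = 0)
    (hg00 : g 0 0 = 1) (hg10 : g 1 0 = 0) (ℓ : ℕ) :
    (Δ_[1])^[ℓ] (g (2 * ℓ + 1)) 0 * (3 * 2 ^ ℓ) * m 2
      = ℓ * (2 * ℓ + 1).factorial * m 2 ^ ℓ * m 3 := by
  induction ℓ with
  | zero => simp [hg10]
  | succ ℓ ih =>
    have hchoose₃ : ((2 * ℓ + 3).choose (2 * ℓ) * 6 * (2 * ℓ).factorial : R)
        = (2 * ℓ + 3).factorial := by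
      have h := Nat.add_choose_mul_factorial_mul_factorial 3 (2 * ℓ)
      rw [add_comm, show (3 : ℕ).factorial = 6 from rfl] at h
      exact_mod_cast congrArg (Nat.cast : ℕ → R) h
    have hchoose₂ : ((2 * ℓ + 3).choose (2 * ℓ + 1) * 2 * (2 * ℓ + 1).factorial : R)
        = (2 * ℓ + 3).factorial := by
      have h := Nat.add_choose_mul_factorial_mul_factorial 2 (2 * ℓ + 1)
      rw [add_comm, Nat.factorial_two] at h
      exact_mod_cast congrArg (Nat.cast : ℕ → R) h
    rw [show 2 * (ℓ + 1) + 1 = 2 * ℓ + 3 by ring, hg.fwdDiff_iter_succ_eq_sum_Ico hm0 hm1,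
      sum_Ico_succ_top (by omega), sum_Ico_succ_top (by omega), sum_Ico_succ_top (by omega),
      Ico_self]
    simp only [sum_empty, show 2 * ℓ + 3 - (2 * ℓ + 2) = 1 by omega,
      show 2 * ℓ + 3 - (2 * ℓ + 1) = 2 by omega, Nat.add_sub_cancel_left, hm1,
      Pi.add_apply, Pi.smul_apply, smul_eq_mul, zero_mul, zero_add, add_zero]
    push_cast
    linear_combination
      (6 * m 3 * m 2 * (2 * ℓ + 3).choose (2 * ℓ)) * hg.fwdDiff_iter_even hm0 hm1 hg00 ℓ
      + (2 * m 2 * (2 * ℓ + 3).choose (2 * ℓ + 1)) * ih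
      + (m 3 * m 2 ^ (ℓ + 1)) * hchoose₃ + (ℓ * m 2 ^ (ℓ + 1) * m 3) * hchoose₂

end IsWalkMoments

section

variable {Ω : Type*} [MeasurableSpace Ω] {μ : Measure Ω}

theorem ProbabilityTheory.IndepFun.pow {X Z : Ω → ℝ} (h : IndepFun X Z μ) (i j : ℕ) :
    IndepFun (fun ω => X ω ^ i) (fun ω => Z ω ^ j) μ :=
  h.comp (measurable_id.pow_const i) (measurable_id.pow_const j)

theorem ProbabilityTheory.IndepFun.integrable_pow_mul_pow_s10 {X Z : Ω → ℝ} (h : IndepFun X Z μ)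
    (hX : ∀ i, Integrable (fun ω => X ω ^ i) μ) (hZ : ∀ i, Integrable (fun ω => Z ω ^ i) μ)
    (i j : ℕ) : Integrable (fun ω => X ω ^ i * Z ω ^ j) μ :=
  (h.pow i j).integrable_mul (hX i) (hZ j)

theorem ProbabilityTheory.IndepFun.integrable_add_pow_s10 {X Z : Ω → ℝ} (h : IndepFun X Z μ)
    (hX : ∀ i, Integrable (fun ω => X ω ^ i) μ) (hZ : ∀ i, Integrable (fun ω => Z ω ^ i) μ)
    (n : ℕ) : Integrable (fun ω => (X ω + Z ω) ^ n) μ := by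
  simp_rw [add_pow]
  exact integrable_finsetSum _ fun i _ => (h.integrable_pow_mul_pow_s10 hX hZ i (n - i)).mul_const _

theorem ProbabilityTheory.IndepFun.integral_add_pow {X Z : Ω → ℝ} (h : IndepFun X Z μ)
    (hX : ∀ i, Integrable (fun ω => X ω ^ i) μ) (hZ : ∀ i, Integrable (fun ω => Z ω ^ i) μ)
    (n : ℕ) :
    ∫ ω, (X ω + Z ω) ^ n ∂μ
      = ∑ i ∈ range (n + 1), (∫ ω, X ω ^ i ∂μ) * (∫ ω, Z ω ^ (n - i) ∂μ) * n.choose i := by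
  simp_rw [add_pow]
  rw [integral_finsetSum _ fun i _ => (h.integrable_pow_mul_pow_s10 hX hZ i (n - i)).mul_const _]
  refine sum_congr rfl fun i _ => ?_
  rw [integral_mul_const, (h.pow i (n - i)).integral_fun_mul_eq_mul_integral
    (hX i).aestronglyMeasurable (hZ (n - i)).aestronglyMeasurable]

variable {Y : ℕ → Ω → ℝ}

theorem ProbabilityTheory.iIndepFun.indepFun_partialSum (hindep : iIndepFun Y μ)
    (hmeas : ∀ i, Measurable (Y i)) (k : ℕ) :
    IndepFun (fun ω => ∑ i ∈ range k, Y i ω) (Y k) μ := by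
  simpa only [← Finset.sum_apply] using hindep.indepFun_sum_range_succ hmeas k

theorem integrable_partialSum_pow [IsFiniteMeasure μ] (hindep : iIndepFun Y μ)
    (hmeas : ∀ i, Measurable (Y i)) (hY : ∀ i t, Integrable (fun ω => Y i ω ^ t) μ) (k n : ℕ) :
    Integrable (fun ω => (∑ i ∈ range k, Y i ω) ^ n) μ := by
  induction k generalizing n with
  | zero => simp
  | succ k ih =>
    simp_rw [sum_range_succ]
    exact (hindep.indepFun_partialSum hmeas k).integrable_add_pow_s10 ih (hY k) n

theorem isWalkMoments_partialSum [IsFiniteMeasure μ] (hindep : iIndepFun Y μ)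
    (hmeas : ∀ i, Measurable (Y i)) (hident : ∀ i, IdentDistrib (Y i) (Y 0) μ μ)
    (hY₀ : ∀ t, Integrable (fun ω => Y 0 ω ^ t) μ) :
    IsWalkMoments (fun t => ∫ ω, Y 0 ω ^ t ∂μ)
      (fun n k => ∫ ω, (∑ i ∈ range k, Y i ω) ^ n ∂μ) := by
  have hpow (i t : ℕ) : IdentDistrib (fun ω => Y i ω ^ t) (fun ω => Y 0 ω ^ t) μ μ :=
    (hident i).comp (measurable_id.pow_const t)
  have hY (i t : ℕ) : Integrable (fun ω => Y i ω ^ t) μ := (hpow i t).integrable_iff.mpr (hY₀ t)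
  intro n k
  simp only [sum_range_succ (fun i => Y i _) k]
  rw [(hindep.indepFun_partialSum hmeas k).integral_add_pow
    (integrable_partialSum_pow hindep hmeas hY k) (hY k)]
  simp only [(hpow k _).integral_eq]

end

theorem fwdDiff_iter_eq_sum_choose {R : Type*} [CommRing R] (f : ℕ → R) (n : ℕ) :
    (Δ_[1])^[n] f 0 = ∑ k ∈ range (n + 1), (n.choose k : R) * (-1) ^ (n - k) * f k := by
  rw [fwdDiff_iter_eq_sum_shift]
  refine sum_congr rfl fun k _ => ?_
  simp only [zsmul_eq_mul, zero_add, nsmul_eq_mul, mul_one]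
  push_cast
  ring

/-- If `E[Y] = 0`, `E[Y²] = σ² > 0` and all moments are finite, then
`S_Y(2j+1,j) = j(2j+1) · σ^{2j}(2j)!/(j!2^j) · E[Y³]/(3σ²)`. -/
theorem stmt_10 {Ω : Type*} [MeasurableSpace Ω] (μ : Measure Ω) [IsProbabilityMeasure μ]
    (Y : ℕ → Ω → ℝ) (hmeas : ∀ i, Measurable (Y i))
    (hindep : iIndepFun Y μ)
    (hident : ∀ i, IdentDistrib (Y i) (Y 0) μ μ)
    (hmom : ∀ j : ℕ, Integrable (fun ω => |Y 0 ω| ^ j) μ)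
    (hcent : ∫ ω, Y 0 ω ∂μ = 0)
    (σ : ℝ) (hσpos : 0 < σ) (hσ : ∫ ω, (Y 0 ω) ^ 2 ∂μ = σ ^ 2)
    (j : ℕ) :
    (j.factorial : ℝ)⁻¹ * ∑ k ∈ Finset.range (j + 1), (j.choose k : ℝ) * (-1) ^ (j - k) *
        ∫ ω, (∑ i ∈ Finset.range k, Y i ω) ^ (2 * j + 1) ∂μ
      = (j : ℝ) * (2 * j + 1) *
          (σ ^ (2 * j) * ((2 * j).factorial : ℝ) / ((j.factorial : ℝ) * 2 ^ j)) *
          ((∫ ω, (Y 0 ω) ^ 3 ∂μ) / (3 * σ ^ 2)) := by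
  have hY₀ (t : ℕ) : Integrable (fun ω => Y 0 ω ^ t) μ :=
    (integrable_norm_iff ((hmeas 0).pow_const t).aestronglyMeasurable).mp
      (by simpa only [Real.norm_eq_abs, abs_pow] using hmom t)
  have hodd := (isWalkMoments_partialSum hindep hmeas hident hY₀).fwdDiff_iter_odd
    (by simp) (by simpa using hcent) (by simp) (by simp) j
  rw [fwdDiff_iter_eq_sum_choose] at hodd
  simp only [hσ, Nat.factorial_succ] at hodd
  field_simp
  push_cast at hodd ⊢
  linear_combination hodd
end

section
/- Let Y be a real random variable with all moments finite, (Y_k) i.i.d. copies, S_k partial sums, and define S_Y(j,m) via (1/m!) ∑_{k=0}^{m} C(m,k)(-1)^{m-k} E[S_k^j]. Then for 0 ≤ m ≤ j, |S_Y(j,m)| ≤ E[(|Y_1| + ... + |Y_m|)^j] / m!. -/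
open MeasureTheory ProbabilityTheory Finset

/-!
Expanding `(∑ i ∈ K, y i) ^ j` as a sum over maps `f : Fin j → K` and applying inclusion–exclusion
to the image of `f` shows that `∑ K ⊆ [m], (-1) ^ (m - #K) * (∑ i ∈ K, y i) ^ j` is the sum of
`∏ t, y (f t)` over the surjections `f : Fin j → [m]`. It is therefore bounded in absolute value
by `(∑ i < m, |y i|) ^ j`, pointwise. Since the `Y i` are i.i.d., `∑ i ∈ K, Y i` has the law of
`S_#K`, so integrating the pointwise alternating sum gives `∑ k, C(m,k) (-1)^(m-k) E[S_k^j]`.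
-/

namespace Finset

variable {ι R : Type*} [DecidableEq ι]

theorem sum_powerset_neg_one_pow_mul_ite_subset [CommRing R] {s A : Finset ι} (hA : A ⊆ s) :
    ∑ K ∈ s.powerset, (-1 : R) ^ (#s - #K) * (if A ⊆ K then 1 else 0)
      = if s ⊆ A then 1 else 0 := by
  have hterm : ∀ K ∈ s.powerset, (-1 : R) ^ (#s - #K) * (if A ⊆ K then 1 else 0)
      = (∏ _i ∈ K, (1 : R)) * ∏ i ∈ s \ K, -(if i ∉ A then 1 else 0) := by
    intro K hK
    have hAK : A ⊆ K ↔ ∀ i ∈ s \ K, i ∉ A := by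
      simp only [mem_sdiff, and_imp]
      exact ⟨fun h i _ hiK hiA => hiK (h hiA), fun h i hiA => by_contra (h i (hA hiA) · hiA)⟩
    rw [prod_const_one, one_mul, prod_neg, prod_boole, card_sdiff_of_subset (mem_powerset.mp hK)]
    simp only [hAK]
  calc _ = ∏ i ∈ s, (1 + -(if i ∉ A then 1 else 0) : R) := by rw [sum_congr rfl hterm, prod_add]
    _ = ∏ i ∈ s, (if i ∈ A then 1 else 0 : R) :=
        prod_congr rfl fun i _ => by by_cases hi : i ∈ A <;> simp [hi]
    _ = _ := by rw [prod_boole]; exact if_congr Iff.rfl rfl rfl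

theorem sum_powerset_neg_one_pow_mul_sum_pow [CommRing R] (s : Finset ι) (y : ι → R) (j : ℕ) :
    ∑ K ∈ s.powerset, (-1) ^ (#s - #K) * (∑ i ∈ K, y i) ^ j
      = ∑ f ∈ Fintype.piFinset (fun _ : Fin j ↦ s) with s ⊆ univ.image f, ∏ t, y (f t) := by
  have hpi : ∀ K ∈ s.powerset,
      Fintype.piFinset (fun _ : Fin j ↦ K)
        = {f ∈ Fintype.piFinset fun _ : Fin j ↦ s | univ.image f ⊆ K} := by
    intro K hK
    ext f
    simp only [Fintype.mem_piFinset, mem_filter, image_subset_iff, mem_univ, true_implies]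
    exact ⟨fun h => ⟨fun t => mem_powerset.mp hK (h t), h⟩, And.right⟩
  calc ∑ K ∈ s.powerset, (-1) ^ (#s - #K) * (∑ i ∈ K, y i) ^ j
      = ∑ K ∈ s.powerset, ∑ f ∈ Fintype.piFinset fun _ : Fin j ↦ s,
          (-1) ^ (#s - #K) * (if univ.image f ⊆ K then 1 else 0) * ∏ t, y (f t) := by
        refine sum_congr rfl fun K hK => ?_
        rw [sum_pow', hpi K hK, sum_filter, mul_sum]
        refine sum_congr rfl fun f _ => ?_
        split_ifs <;> ring
    _ = ∑ f ∈ Fintype.piFinset fun _ : Fin j ↦ s,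
          (∑ K ∈ s.powerset, (-1) ^ (#s - #K) * (if univ.image f ⊆ K then 1 else 0))
            * ∏ t, y (f t) := by
        rw [sum_comm]
        simp only [sum_mul]
    _ = _ := by
        rw [sum_filter]
        refine sum_congr rfl fun f hf => ?_
        rw [sum_powerset_neg_one_pow_mul_ite_subset]
        · split_ifs <;> ring
        · simpa [image_subset_iff] using hf

theorem abs_sum_powerset_neg_one_pow_mul_sum_pow_le [CommRing R] [LinearOrder R]
    [IsStrictOrderedRing R] (s : Finset ι) (y : ι → R) (j : ℕ) :
    |∑ K ∈ s.powerset, (-1) ^ (#s - #K) * (∑ i ∈ K, y i) ^ j| ≤ (∑ i ∈ s, |y i|) ^ j := by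
  rw [sum_powerset_neg_one_pow_mul_sum_pow, sum_pow']
  calc _ ≤ ∑ f ∈ Fintype.piFinset (fun _ : Fin j ↦ s) with s ⊆ univ.image f, ∏ t, |y (f t)| := by
        refine (abs_sum_le_sum_abs _ _).trans_eq (sum_congr rfl fun f _ => abs_prod _ _)
    _ ≤ _ := sum_le_sum_of_subset_of_nonneg (filter_subset _ _)
        fun f _ _ => prod_nonneg fun t _ => abs_nonneg _

end Finset

namespace MeasureTheory

variable {α : Type*} [MeasurableSpace α] {μ : Measure α}

theorem memLp_of_integrable_norm_pow {E : Type*} [NormedAddCommGroup E] {f : α → E}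
    (hf : AEStronglyMeasurable f μ) {p : ℕ} (h : Integrable (fun x ↦ ‖f x‖ ^ p) μ) :
    MemLp f p μ := by
  rcases eq_or_ne p 0 with rfl | hp
  · simpa using hf
  · rw [← integrable_norm_rpow_iff hf (by simpa) (by simp)]
    simpa using h

theorem MemLp.integrable_pow [IsFiniteMeasure μ] {𝕜 : Type*} [NormedDivisionRing 𝕜] {f : α → 𝕜}
    {p : ℕ} (hf : MemLp f p μ) : Integrable (fun x ↦ f x ^ p) μ :=
  (integrable_norm_iff (hf.1.pow p)).mp <| by
    simpa only [Pi.pow_apply, norm_pow] using hf.integrable_norm_pow'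

end MeasureTheory

namespace ProbabilityTheory

variable {Ω : Type*} [MeasurableSpace Ω] {μ : Measure Ω}

theorem identDistrib_sum_of_card_eq {ι E : Type*} [AddCommMonoid E] [MeasurableSpace E]
    [MeasurableAdd₂ E] {Y : ι → Ω → E} (hmeas : ∀ i, Measurable (Y i)) (hindep : iIndepFun Y μ)
    (hident : ∀ i k, IdentDistrib (Y i) (Y k) μ μ) {s t : Finset ι} (hst : #s = #t) :
    IdentDistrib (fun ω ↦ ∑ i ∈ s, Y i ω) (fun ω ↦ ∑ i ∈ t, Y i ω) μ μ := by
  classical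
  have := hindep.isProbabilityMeasure
  have hsum : ∀ u : Finset ι, (fun ω ↦ ∑ i ∈ u, Y i ω) = ∑ i ∈ u, Y i := fun u ↦ by
    ext ω; rw [Finset.sum_apply]
  induction s using Finset.induction_on generalizing t with
  | empty =>
    rw [Finset.card_empty, eq_comm, card_eq_zero] at hst
    subst hst
    exact IdentDistrib.refl aemeasurable_const
  | insert a s ha ih =>
    obtain ⟨b, hb⟩ : t.Nonempty :=
      Finset.card_pos.mp (hst ▸ Finset.card_pos.mpr (insert_nonempty a s))
    have hcard : #s = #(t.erase b) := by
      rw [card_erase_of_mem hb, ← hst, card_insert_of_notMem ha, Nat.add_sub_cancel]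
    have hpair := (ih hcard).prodMk (hident a b)
      (hsum s ▸ hindep.indepFun_finsetSum_of_notMem hmeas ha)
      (hsum _ ▸ hindep.indepFun_finsetSum_of_notMem hmeas (notMem_erase b t))
    rw [← insert_erase hb]
    simpa [Function.comp_def, sum_insert ha, sum_insert (notMem_erase b t), add_comm] using
      hpair.comp measurable_add

theorem integral_sum_powerset_neg_one_pow_mul_sum_pow {Y : ℕ → Ω → ℝ}
    (hmeas : ∀ i, Measurable (Y i)) (hindep : iIndepFun Y μ)
    (hident : ∀ i k, IdentDistrib (Y i) (Y k) μ μ) {j : ℕ}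
    (hint : ∀ K : Finset ℕ, Integrable (fun ω ↦ (∑ i ∈ K, Y i ω) ^ j) μ) (m : ℕ) :
    ∫ ω, ∑ K ∈ (range m).powerset, (-1) ^ (#(range m) - #K) * (∑ i ∈ K, Y i ω) ^ j ∂μ
      = ∑ k ∈ range (m + 1), (m.choose k : ℝ) * (-1) ^ (m - k) *
          ∫ ω, (∑ i ∈ range k, Y i ω) ^ j ∂μ := by
  have hK : ∀ K : Finset ℕ,
      ∫ ω, (∑ i ∈ K, Y i ω) ^ j ∂μ = ∫ ω, (∑ i ∈ range #K, Y i ω) ^ j ∂μ := fun K ↦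
    ((identDistrib_sum_of_card_eq hmeas hindep hident (card_range _).symm).comp
      (measurable_id.pow_const j)).integral_eq
  rw [integral_finsetSum _ fun K _ ↦ (hint K).const_mul _, card_range,
    sum_congr rfl fun K _ ↦ by rw [integral_const_mul, hK K],
    sum_powerset_apply_card (fun k ↦ (-1) ^ (m - k) * ∫ ω, (∑ i ∈ range k, Y i ω) ^ j ∂μ),
    card_range]
  simp only [nsmul_eq_mul, mul_assoc]

end ProbabilityTheory

theorem stmt_12_general {Ω : Type*} [MeasurableSpace Ω] (μ : Measure Ω) [IsProbabilityMeasure μ]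
    (Y : ℕ → Ω → ℝ) (hmeas : ∀ i, Measurable (Y i))
    (hindep : iIndepFun Y μ)
    (hident : ∀ i, IdentDistrib (Y i) (Y 0) μ μ)
    (hmom : ∀ j : ℕ, Integrable (fun ω => |Y 0 ω| ^ j) μ)
    (j m : ℕ) :
    |(m.factorial : ℝ)⁻¹ * ∑ k ∈ Finset.range (m + 1), (m.choose k : ℝ) * (-1) ^ (m - k) *
        ∫ ω, (∑ i ∈ Finset.range k, Y i ω) ^ j ∂μ|
      ≤ (∫ ω, (∑ i ∈ Finset.range m, |Y i ω|) ^ j ∂μ) / (m.factorial : ℝ) := by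
  have hLp : ∀ i, MemLp (Y i) j μ := fun i ↦ (hident i).memLp_iff.mpr <|
    memLp_of_integrable_norm_pow (hmeas 0).aestronglyMeasurable (by simpa using hmom j)
  have hint : ∀ K : Finset ℕ, Integrable (fun ω ↦ (∑ i ∈ K, Y i ω) ^ j) μ := fun K ↦
    (memLp_finsetSum K fun i _ ↦ hLp i).integrable_pow
  have hbound : Integrable (fun ω ↦ (∑ i ∈ range m, |Y i ω|) ^ j) μ :=
    (memLp_finsetSum _ fun i _ ↦ (hLp i).abs).integrable_pow
  rw [← integral_sum_powerset_neg_one_pow_mul_sum_pow hmeas hindep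
    (fun i k ↦ (hident i).trans (hident k).symm) hint, abs_mul, abs_inv, Nat.abs_cast,
    div_eq_inv_mul]
  gcongr
  refine norm_integral_le_of_norm_le (G := ℝ) hbound (ae_of_all _ fun ω ↦ ?_)
  exact abs_sum_powerset_neg_one_pow_mul_sum_pow_le (range m) (Y · ω) j

/-- `|S_Y(j,m)| ≤ E[(|Y₁| + ⋯ + |Y_m|)^j] / m!` for `0 ≤ m ≤ j`, where
`S_Y(j,m) = (1/m!) ∑_{k=0}^m C(m,k)(-1)^{m-k} E[S_k^j]`. -/
theorem stmt_12 {Ω : Type*} [MeasurableSpace Ω] (μ : Measure Ω) [IsProbabilityMeasure μ]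
    (Y : ℕ → Ω → ℝ) (hmeas : ∀ i, Measurable (Y i))
    (hindep : iIndepFun Y μ)
    (hident : ∀ i, IdentDistrib (Y i) (Y 0) μ μ)
    (hmom : ∀ j : ℕ, Integrable (fun ω => |Y 0 ω| ^ j) μ)
    (j m : ℕ) (hmj : m ≤ j) :
    |(m.factorial : ℝ)⁻¹ * ∑ k ∈ Finset.range (m + 1), (m.choose k : ℝ) * (-1) ^ (m - k) *
        ∫ ω, (∑ i ∈ Finset.range k, Y i ω) ^ j ∂μ|
      ≤ (∫ ω, (∑ i ∈ Finset.range m, |Y i ω|) ^ j ∂μ) / (m.factorial : ℝ) :=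
  stmt_12_general μ Y hmeas hindep hident hmom j m
end

section
/- Let Y be a real random variable with finite moment generating function near 0, and define S_Y(j,m) = (1/m!) ∑_{k=0}^{m} C(m,k)(-1)^{m-k} E[S_k^j] where S_k are partial sums of i.i.d. copies of Y. Then the j-th cumulant of Y satisfies κ_j(Y) = ∑_{m=1}^{j} (-1)^{m-1} (m-1)! S_Y(j,m). -/
/-!
The cumulant generating function is `log M` with `M` the moment generating function of `Y`,
analytic at `0` with `M 0 = 1`. Write `log (1 + u) = ∑_{m ≤ j} (-1)^(m-1) u^m / m + F u`; since
`F' u = (-u)^j / (1 + u)` and `F 0 = 0`, `F` vanishes to order `j + 1` at `0`, hence so does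
`F ∘ (M - 1)`. So the `j`-th derivative of `log M` at `0` is that of
`∑_{m ≤ j} (-1)^(m-1) (M - 1)^m / m`. Expanding `(M - 1)^m` binomially, `M^k` is the moment
generating function of `S_k` by independence, and its `j`-th derivative at `0` is `E[S_k^j]`.
-/

open MeasureTheory ProbabilityTheory Finset Filter Real
open scoped Topology

noncomputable def logOneAddTaylorRemainder (n : ℕ) (v : ℝ) : ℝ :=
  log (1 + v) - ∑ i ∈ range n, (-1) ^ i / (i + 1) * v ^ (i + 1)

lemma analyticAt_logOneAddTaylorRemainder (n : ℕ) :
    AnalyticAt ℝ (logOneAddTaylorRemainder n) 0 := by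
  have : AnalyticAt ℝ (fun v : ℝ ↦ log (1 + v)) 0 :=
    (analyticAt_const.add analyticAt_id).log (by simp)
  unfold logOneAddTaylorRemainder
  fun_prop

lemma hasDerivAt_logOneAddTaylorRemainder {u : ℝ} (hu : 1 + u ≠ 0) (n : ℕ) :
    HasDerivAt (logOneAddTaylorRemainder n) ((-u) ^ n / (1 + u)) u := by
  have hsum : HasDerivAt (fun v : ℝ ↦ ∑ i ∈ range n, (-1) ^ i / (i + 1) * v ^ (i + 1))
      (∑ i ∈ range n, (-u) ^ i) u := by
    refine (HasDerivAt.fun_sum fun i _ ↦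
      (hasDerivAt_pow (i + 1) u).const_mul ((-1 : ℝ) ^ i / (i + 1))).congr_deriv ?_
    refine sum_congr rfl fun i _ ↦ ?_
    push_cast
    field_simp
    rw [neg_pow]
    ring
  refine ((((hasDerivAt_id u).const_add 1).log hu).sub hsum).congr_deriv ?_
  have hgeom := geom_sum_eq (x := -u) (by contrapose! hu; linarith) n
  have hu' : -u - 1 ≠ 0 := by contrapose! hu; linarith
  rw [hgeom, id]
  field_simp
  ring

lemma natCast_add_one_le_analyticOrderAt_logOneAddTaylorRemainder (n : ℕ) :
    ((n + 1 : ℕ) : ℕ∞) ≤ analyticOrderAt (logOneAddTaylorRemainder n) 0 := by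
  have hF := analyticAt_logOneAddTaylorRemainder n
  have hderiv : deriv (logOneAddTaylorRemainder n) =ᶠ[𝓝 0]
      fun v ↦ (v - 0) ^ n • ((-1) ^ n / (1 + v)) := by
    have : ∀ᶠ v in 𝓝 (0 : ℝ), 1 + v ≠ 0 :=
      (continuous_const.add continuous_id).continuousAt.eventually_ne (by simp)
    filter_upwards [this] with v hv
    rw [(hasDerivAt_logOneAddTaylorRemainder hv n).deriv, neg_pow, smul_eq_mul, sub_zero]
    ring
  have hderiv_order : (n : ℕ∞) ≤ analyticOrderAt (deriv (logOneAddTaylorRemainder n)) 0 := by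
    rw [analyticOrderAt_congr hderiv, natCast_le_analyticOrderAt (by fun_prop (disch := simp))]
    refine ⟨fun v ↦ (-1) ^ n / (1 + v), ?_, .of_forall fun _ ↦ rfl⟩
    fun_prop (disch := simp)
  have hF0 : logOneAddTaylorRemainder n 0 = 0 := by simp [logOneAddTaylorRemainder]
  have hF_order := hF.analyticOrderAt_deriv_add_one
  simp only [hF0, sub_zero] at hF_order
  rw [← hF_order, Nat.cast_succ]
  gcongr

lemma sum_range_succ_eq_sum_Icc {M : Type*} [AddCommMonoid M] (g : ℕ → M) (n : ℕ) :
    ∑ i ∈ range n, g (i + 1) = ∑ m ∈ Icc 1 n, g m := by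
  rw [range_eq_Ico, sum_Ico_add' g 0 n 1, zero_add, Ico_add_one_right_eq_Icc]

lemma iteratedDeriv_log_comp_eq_sum {f : ℝ → ℝ} {x : ℝ} (hf : AnalyticAt ℝ f x) (hfx : f x = 1)
    {j n : ℕ} (hjn : j ≤ n) :
    iteratedDeriv j (fun t ↦ log (f t)) x =
      ∑ m ∈ Icc 1 n, (-1) ^ (m - 1) / m * iteratedDeriv j (fun t ↦ (f t - 1) ^ m) x := by
  set F := logOneAddTaylorRemainder n ∘ fun t ↦ f t - 1
  have hu : AnalyticAt ℝ (fun t ↦ f t - 1) x := by fun_prop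
  have hF_at : AnalyticAt ℝ (logOneAddTaylorRemainder n) (f x - 1) := by
    simpa [hfx] using analyticAt_logOneAddTaylorRemainder n
  have hF : AnalyticAt ℝ F x := hF_at.comp (f := fun t ↦ f t - 1) hu
  have hu_order : 1 ≤ analyticOrderAt (fun t ↦ f t - 1 - 0) x := by
    rw [Order.one_le_iff_ne_zero, analyticOrderAt_ne_zero]
    exact ⟨by fun_prop, by simp [hfx]⟩
  have hF_order : ((n + 1 : ℕ) : ℕ∞) ≤ analyticOrderAt F x := by
    rw [hF_at.analyticOrderAt_comp (g := fun t ↦ f t - 1) hu, hfx, sub_self]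
    simpa using
      mul_le_mul' (natCast_add_one_le_analyticOrderAt_logOneAddTaylorRemainder n) hu_order
  have hF_deriv : iteratedDeriv j F x = 0 :=
    (natCast_le_analyticOrderAt_iff_iteratedDeriv_eq_zero hF).1 hF_order j (by omega)
  have hsplit : (fun t ↦ log (f t)) =
      fun t ↦ F t + ∑ i ∈ range n, (-1) ^ i / (i + 1) * (f t - 1) ^ (i + 1) := by
    funext t
    simp [F, logOneAddTaylorRemainder]
  have hf' : ContDiffAt ℝ j f x := hf.contDiffAt
  rw [hsplit, iteratedDeriv_fun_add hF.contDiffAt (by fun_prop), hF_deriv, zero_add,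
    iteratedDeriv_fun_sum (fun i _ ↦ by fun_prop), ← sum_range_succ_eq_sum_Icc]
  refine sum_congr rfl fun i _ ↦ ?_
  rw [iteratedDeriv_const_mul _ (by fun_prop), Nat.add_sub_cancel, Nat.cast_add_one]

namespace ProbabilityTheory

lemma IdentDistrib.integrableExpSet_eq {Ω Ω' : Type*} [MeasurableSpace Ω] [MeasurableSpace Ω']
    {μ : Measure Ω} {μ' : Measure Ω'} {X : Ω → ℝ} {X' : Ω' → ℝ} (h : IdentDistrib X X' μ μ') :
    integrableExpSet X μ = integrableExpSet X' μ' := by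
  ext t
  exact (h.comp (measurable_const_mul t).exp).integrable_iff

section IID

variable {Ω ι : Type*} [MeasurableSpace Ω] {μ : Measure Ω} {X : ι → Ω → ℝ} {i₀ : ι}

lemma iIndepFun.integrableExpSet_subset_sum [IsFiniteMeasure μ] (h_indep : iIndepFun X μ)
    (h_meas : ∀ i, Measurable (X i)) (s : Finset ι)
    (hident : ∀ i ∈ s, IdentDistrib (X i) (X i₀) μ μ) :
    integrableExpSet (X i₀) μ ⊆ integrableExpSet (∑ i ∈ s, X i) μ := fun _ ht ↦
  h_indep.integrable_exp_mul_sum h_meas fun i hi ↦ by rwa [← (hident i hi).integrableExpSet_eq] at ht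

lemma iIndepFun.mgf_sum_eq_pow (h_indep : iIndepFun X μ) (h_meas : ∀ i, Measurable (X i))
    (s : Finset ι) (hident : ∀ i ∈ s, IdentDistrib (X i) (X i₀) μ μ) :
    mgf (∑ i ∈ s, X i) μ = fun t ↦ mgf (X i₀) μ t ^ s.card := by
  funext t
  rw [h_indep.mgf_sum h_meas]
  exact prod_eq_pow_card fun i hi ↦ mgf_congr_of_identDistrib _ _ (hident i hi) t

end IID

section IIDSequence

variable {Ω : Type*} [MeasurableSpace Ω] {μ : Measure Ω} [IsFiniteMeasure μ] {Y : ℕ → Ω → ℝ}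

lemma iIndepFun.iteratedDeriv_mgf_pow_zero (h_indep : iIndepFun Y μ)
    (h_meas : ∀ i, Measurable (Y i)) (hident : ∀ i, IdentDistrib (Y i) (Y 0) μ μ)
    (h0 : 0 ∈ interior (integrableExpSet (Y 0) μ)) (j k : ℕ) :
    iteratedDeriv j (fun t ↦ mgf (Y 0) μ t ^ k) 0 = ∫ ω, (∑ i ∈ range k, Y i ω) ^ j ∂μ := by
  have hident_k : ∀ i ∈ range k, IdentDistrib (Y i) (Y 0) μ μ := fun i _ ↦ hident i
  have h0_k : 0 ∈ interior (integrableExpSet (∑ i ∈ range k, Y i) μ) :=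
    interior_mono (h_indep.integrableExpSet_subset_sum h_meas _ hident_k) h0
  have hmgf_k := h_indep.mgf_sum_eq_pow h_meas _ hident_k
  rw [card_range] at hmgf_k
  rw [← hmgf_k, iteratedDeriv_mgf_zero h0_k]
  simp [Finset.sum_apply]

lemma iIndepFun.iteratedDeriv_mgf_sub_one_pow_zero (h_indep : iIndepFun Y μ)
    (h_meas : ∀ i, Measurable (Y i)) (hident : ∀ i, IdentDistrib (Y i) (Y 0) μ μ)
    (h0 : 0 ∈ interior (integrableExpSet (Y 0) μ)) (j m : ℕ) :
    iteratedDeriv j (fun t ↦ (mgf (Y 0) μ t - 1) ^ m) 0 =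
      ∑ k ∈ range (m + 1), (m.choose k : ℝ) * (-1) ^ (m - k) *
        ∫ ω, (∑ i ∈ range k, Y i ω) ^ j ∂μ := by
  have hM : ContDiffAt ℝ j (mgf (Y 0) μ) 0 := (analyticAt_mgf h0).contDiffAt
  have hbinom : (fun t ↦ (mgf (Y 0) μ t - 1) ^ m) =
      fun t ↦ ∑ k ∈ range (m + 1), (m.choose k : ℝ) * (-1) ^ (m - k) * mgf (Y 0) μ t ^ k := by
    funext t
    rw [sub_eq_add_neg, add_pow]
    exact sum_congr rfl fun k _ ↦ by ring
  rw [hbinom, iteratedDeriv_fun_sum fun k _ ↦ by fun_prop]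
  refine sum_congr rfl fun k _ ↦ ?_
  rw [iteratedDeriv_const_mul _ (by fun_prop), h_indep.iteratedDeriv_mgf_pow_zero h_meas hident h0]

end IIDSequence

end ProbabilityTheory

theorem stmt_16_general {Ω : Type*} [MeasurableSpace Ω] (μ : Measure Ω) [IsProbabilityMeasure μ]
    (Y : ℕ → Ω → ℝ) (hmeas : ∀ i, Measurable (Y i))
    (hindep : iIndepFun Y μ)
    (hident : ∀ i, IdentDistrib (Y i) (Y 0) μ μ)
    (R : ℝ) (hR : 0 < R)
    (hmgf : ∀ t : ℝ, |t| < R → Integrable (fun ω => Real.exp (t * Y 0 ω)) μ)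
    (j : ℕ) :
    iteratedDeriv j (cgf (Y 0) μ) 0
      = ∑ m ∈ Finset.Icc 1 j, (-1 : ℝ) ^ (m - 1) * ((m - 1).factorial : ℝ) *
          ((m.factorial : ℝ)⁻¹ * ∑ k ∈ Finset.range (m + 1),
            (m.choose k : ℝ) * (-1) ^ (m - k) *
              ∫ ω, (∑ i ∈ Finset.range k, Y i ω) ^ j ∂μ) := by
  have h0 : 0 ∈ interior (integrableExpSet (Y 0) μ) :=
    mem_interior_iff_mem_nhds.2 <| Filter.mem_of_superset (Ioo_mem_nhds (neg_neg_of_pos hR) hR)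
      fun t ht ↦ hmgf t (abs_lt.2 ht)
  rw [show cgf (Y 0) μ = fun t ↦ log (mgf (Y 0) μ t) from rfl,
    iteratedDeriv_log_comp_eq_sum (analyticAt_mgf h0) mgf_zero le_rfl]
  refine sum_congr rfl fun m hm ↦ ?_
  rw [hindep.iteratedDeriv_mgf_sub_one_pow_zero hmeas hident h0]
  have hm_pos : 0 < m := (mem_Icc.1 hm).1
  rw [← Nat.mul_factorial_pred hm_pos.ne']
  push_cast
  field_simp

/-- For `Y` with finite moment generating function near `0`, the `j`-th cumulant
(the `j`-th derivative at `0` of the cumulant generating function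
`K_Y(t) = log E[e^{tY}]`) satisfies
`κ_j(Y) = ∑_{m=1}^{j} (-1)^{m-1} (m-1)! S_Y(j,m)`, where
`S_Y(j,m) = (1/m!) ∑_{k=0}^m C(m,k)(-1)^{m-k} E[S_k^j]` and `S_k` is the sum of `k`
i.i.d. copies of `Y`. -/
theorem stmt_16 {Ω : Type*} [MeasurableSpace Ω] (μ : Measure Ω) [IsProbabilityMeasure μ]
    (Y : ℕ → Ω → ℝ) (hmeas : ∀ i, Measurable (Y i))
    (hindep : iIndepFun Y μ)
    (hident : ∀ i, IdentDistrib (Y i) (Y 0) μ μ)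
    (R : ℝ) (hR : 0 < R)
    (hmgf : ∀ t : ℝ, |t| < R → Integrable (fun ω => Real.exp (t * Y 0 ω)) μ)
    (j : ℕ) (hj : 1 ≤ j) :
    iteratedDeriv j (cgf (Y 0) μ) 0
      = ∑ m ∈ Finset.Icc 1 j, (-1 : ℝ) ^ (m - 1) * ((m - 1).factorial : ℝ) *
          ((m.factorial : ℝ)⁻¹ * ∑ k ∈ Finset.range (m + 1),
            (m.choose k : ℝ) * (-1) ^ (m - k) *
              ∫ ω, (∑ i ∈ Finset.range k, Y i ω) ^ j ∂μ) :=
  stmt_16_general μ Y hmeas hindep hident R hR hmgf j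
end

section
/- Let U and V be independent real random variables where U has finite moment generating function near 0 and V is standard normal, and set Y = U + iV. Then for r ≥ 1, E[Y^k] = 0 for k = 1,...,r if and only if E[U^k] = E[V^k] for k = 1,...,r. -/
/-!
By the binomial theorem and independence, `E[Y^k] = ∑ⱼ C(k,j) i^(k-j) E[U^j] E[V^(k-j)]`.
The same sum with `E[U^j]` replaced by the Gaussian moment `E[V^j]` is `E[(Z + iV)^k]` for an
independent standard normal `Z`, and vanishes for `k ≥ 1`: it is the `k`-th derivative at `0` of
`E[e^(zZ)] E[e^(izV)] = e^(z²/2) e^(-z²/2) = 1`. Subtracting, `E[Y^k]` is a unitriangular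
combination (as `E[V^0] = 1`) of the differences `E[U^j] - E[V^j]`, `1 ≤ j ≤ k`, so the first `r`
of the `E[Y^k]` vanish iff the first `r` of these differences do.
-/

open MeasureTheory ProbabilityTheory Complex

lemma forall_sum_mul_eq_zero_iff_of_unitriangular {R : Type*} [Semiring R] {a : ℕ → ℕ → R}
    {d : ℕ → R} (ha : ∀ k, a k k = 1) (hd : d 0 = 0) (r : ℕ) :
    (∀ k ∈ Finset.Icc 1 r, ∑ j ∈ Finset.range (k + 1), a k j * d j = 0) ↔
      ∀ k ∈ Finset.Icc 1 r, d k = 0 := by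
  constructor
  · intro h k
    induction k using Nat.strong_induction_on with
    | _ k ih =>
      intro hk
      have lower : ∀ j ∈ Finset.range k, a k j * d j = 0 := by
        intro j hj
        obtain rfl | hj0 := Nat.eq_zero_or_pos j
        · rw [hd, mul_zero]
        · have hjk := Finset.mem_range.1 hj
          rw [ih j hjk (Finset.mem_Icc.2 ⟨hj0, hjk.le.trans (Finset.mem_Icc.1 hk).2⟩), mul_zero]
      simpa [Finset.sum_range_succ, Finset.sum_eq_zero lower, ha] using h k hk
  · intro h k hk
    refine Finset.sum_eq_zero fun j hj ↦ ?_
    obtain rfl | hj0 := Nat.eq_zero_or_pos j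
    · rw [hd, mul_zero]
    · have hjr := (Finset.mem_range_succ_iff.1 hj).trans (Finset.mem_Icc.1 hk).2
      rw [h j (Finset.mem_Icc.2 ⟨hj0, hjr⟩), mul_zero]

lemma ProbabilityTheory.IndepFun.integral_ofReal_add_mul_pow {Ω : Type*} [MeasurableSpace Ω]
    {μ : Measure Ω} {X Y : Ω → ℝ} (hXY : IndepFun X Y μ)
    (hX : AEMeasurable X μ) (hY : AEMeasurable Y μ)
    (hXi : ∀ n : ℕ, Integrable (fun ω ↦ X ω ^ n) μ)
    (hYi : ∀ n : ℕ, Integrable (fun ω ↦ Y ω ^ n) μ) (c : ℂ) (k : ℕ) :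
    ∫ ω, ((X ω : ℂ) + c * Y ω) ^ k ∂μ = ∑ j ∈ Finset.range (k + 1),
      (k.choose j : ℂ) * (∫ ω, X ω ^ j ∂μ : ℝ) *
        (c ^ (k - j) * (∫ ω, Y ω ^ (k - j) ∂μ : ℝ)) := by
  have hcast : ∀ (Z : Ω → ℝ) (n : ℕ),
      (fun ω ↦ (Z ω : ℂ) ^ n) = fun ω ↦ ((Z ω ^ n : ℝ) : ℂ) := fun Z n ↦ by
    ext; push_cast; rfl
  have hterm : ∀ i j, Integrable (fun ω ↦ (X ω : ℂ) ^ i * (Y ω : ℂ) ^ j) μ := fun i j ↦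
    (hXY.comp (φ := fun x : ℝ ↦ (x : ℂ) ^ i) (ψ := fun y : ℝ ↦ (y : ℂ) ^ j)
      (by fun_prop) (by fun_prop)).integrable_mul
        (by rw [Function.comp_def, hcast]; exact (hXi i).ofReal)
        (by rw [Function.comp_def, hcast]; exact (hYi j).ofReal)
  have hprod : ∀ i j, ∫ ω, (X ω : ℂ) ^ i * (Y ω : ℂ) ^ j ∂μ
      = (∫ ω, X ω ^ i ∂μ : ℝ) * (∫ ω, Y ω ^ j ∂μ : ℝ) := fun i j ↦ by
    rw [hXY.integral_fun_comp_mul_comp (f := fun x : ℝ ↦ (x : ℂ) ^ i)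
      (g := fun y : ℝ ↦ (y : ℂ) ^ j) hX hY (by fun_prop) (by fun_prop), hcast X, hcast Y,
      integral_complex_ofReal, integral_complex_ofReal]
  simp_rw [add_pow, mul_pow]
  rw [integral_finsetSum _ fun j _ ↦
    ((hterm j (k - j)).const_mul (c ^ (k - j) * k.choose j)).congr (ae_of_all _ fun ω ↦ by ring)]
  refine Finset.sum_congr rfl fun j _ ↦ ?_
  calc ∫ ω, (X ω : ℂ) ^ j * (c ^ (k - j) * (Y ω : ℂ) ^ (k - j)) * (k.choose j) ∂μ
      = c ^ (k - j) * (k.choose j) * ∫ ω, (X ω : ℂ) ^ j * (Y ω : ℂ) ^ (k - j) ∂μ := by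
        rw [← integral_const_mul]; congr 1; ext ω; ring
    _ = _ := by rw [hprod]; ring

lemma iteratedDeriv_cexp_sq_div_two_zero (n : ℕ) :
    iteratedDeriv n (fun z : ℂ ↦ cexp (z ^ 2 / 2)) 0 = ∫ x, x ^ n ∂gaussianReal 0 1 := by
  have hmgf : (fun z : ℂ ↦ cexp (z ^ 2 / 2)) = complexMGF id (gaussianReal 0 1) := by
    ext z
    simp [complexMGF_id_gaussianReal]
  rw [hmgf, iteratedDeriv_complexMGF (by simp), ← integral_complex_ofReal]
  simp

lemma sum_choose_mul_moment_gaussianReal_mul_I_pow_eq_zero {k : ℕ} (hk : k ≠ 0) :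
    ∑ j ∈ Finset.range (k + 1), (k.choose j : ℂ) * (∫ x, x ^ j ∂gaussianReal 0 1 : ℝ) *
      (I ^ (k - j) * (∫ x, x ^ (k - j) ∂gaussianReal 0 1 : ℝ)) = 0 := by
  set g : ℂ → ℂ := fun z ↦ cexp (z ^ 2 / 2)
  have hg : ContDiff ℂ ⊤ g := by fun_prop
  have hgI : ContDiff ℂ ⊤ fun z ↦ g (I * z) := hg.comp (contDiff_const.mul contDiff_id)
  have hprod : (fun z ↦ g z * g (I * z)) = fun _ ↦ 1 := by
    ext z
    simp only [g, ← Complex.exp_add, mul_pow, I_sq]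
    ring_nf
    exact Complex.exp_zero
  have h := congrArg (fun f ↦ iteratedDeriv k f 0) hprod
  simp only [iteratedDeriv_const, if_neg hk] at h
  rw [iteratedDeriv_fun_mul (hg.of_le le_top).contDiffAt (hgI.of_le le_top).contDiffAt] at h
  simpa only [iteratedDeriv_comp_const_mul (hg.of_le le_top), mul_zero, g,
    iteratedDeriv_cexp_sq_div_two_zero] using h

theorem stmt_17_general {Ω : Type*} [MeasurableSpace Ω] (μ : Measure Ω) [IsProbabilityMeasure μ]
    (U V : Ω → ℝ)
    (hindep : IndepFun U V μ) (hVg : μ.map V = gaussianReal 0 1)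
    (R : ℝ) (hR : 0 < R)
    (hmgf : ∀ t : ℝ, |t| < R → Integrable (fun ω => Real.exp (t * U ω)) μ)
    (r : ℕ) :
    (∀ k ∈ Finset.Icc 1 r, ∫ ω, ((U ω : ℂ) + Complex.I * (V ω : ℂ)) ^ k ∂μ = 0) ↔
      (∀ k ∈ Finset.Icc 1 r, ∫ ω, U ω ^ k ∂μ = ∫ ω, V ω ^ k ∂μ) := by
  have hU0 : 0 ∈ interior (integrableExpSet U μ) :=
    mem_interior_iff_mem_nhds.2 <| Filter.mem_of_superset (Metric.ball_mem_nhds 0 hR)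
      fun t ht ↦ hmgf t (by simpa using ht)
  have hV : AEMeasurable V μ := aemeasurable_of_map_neZero (by rw [hVg]; infer_instance)
  have hVmom : ∀ n : ℕ, ∫ ω, V ω ^ n ∂μ = ∫ x, x ^ n ∂gaussianReal 0 1 := by
    intro n
    rw [← hVg, integral_map hV (continuous_pow n).aestronglyMeasurable]
  have hVi : ∀ n : ℕ, Integrable (fun ω ↦ V ω ^ n) μ := fun n ↦ by
    have := integrable_pow_of_mem_interior_integrableExpSet (X := id) (μ := gaussianReal 0 1)
      (by simp) n
    rw [← hVg] at this
    exact (integrable_map_measure (continuous_pow n).aestronglyMeasurable hV).1 this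
  set d : ℕ → ℂ := fun j ↦ ((∫ ω, U ω ^ j ∂μ - ∫ ω, V ω ^ j ∂μ : ℝ) : ℂ)
  have hY : ∀ k ∈ Finset.Icc 1 r, ∫ ω, ((U ω : ℂ) + I * V ω) ^ k ∂μ =
      ∑ j ∈ Finset.range (k + 1),
        (k.choose j * I ^ (k - j) * (∫ x, x ^ (k - j) ∂gaussianReal 0 1 : ℝ)) * d j := by
    intro k hk
    rw [hindep.integral_ofReal_add_mul_pow (aemeasurable_of_mem_interior_integrableExpSet hU0) hV
      (integrable_pow_of_mem_interior_integrableExpSet hU0) hVi, ← sub_zero (Finset.sum _ _),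
      ← sum_choose_mul_moment_gaussianReal_mul_I_pow_eq_zero (k := k)
        (Nat.one_le_iff_ne_zero.1 (Finset.mem_Icc.1 hk).1),
      ← Finset.sum_sub_distrib]
    refine Finset.sum_congr rfl fun j _ ↦ ?_
    simp only [d, hVmom]
    push_cast
    ring
  rw [forall₂_congr fun k hk ↦ by rw [hY k hk],
    forall_sum_mul_eq_zero_iff_of_unitriangular (fun k ↦ by simp) (by simp [d]) r]
  simp [d, sub_eq_zero]

/-- For `U, V` independent, `U` with finite mgf near `0`, `V` standard normal, and
`Y = U + iV`: for `r ≥ 1`, `E[Y^k] = 0` for `k = 1,…,r` iff `E[U^k] = E[V^k]` for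
`k = 1,…,r`. -/
theorem stmt_17 {Ω : Type*} [MeasurableSpace Ω] (μ : Measure Ω) [IsProbabilityMeasure μ]
    (U V : Ω → ℝ) (hU : Measurable U) (hV : Measurable V)
    (hindep : IndepFun U V μ) (hVg : μ.map V = gaussianReal 0 1)
    (R : ℝ) (hR : 0 < R)
    (hmgf : ∀ t : ℝ, |t| < R → Integrable (fun ω => Real.exp (t * U ω)) μ)
    (r : ℕ) (hr : 1 ≤ r) :
    (∀ k ∈ Finset.Icc 1 r, ∫ ω, ((U ω : ℂ) + Complex.I * (V ω : ℂ)) ^ k ∂μ = 0) ↔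
      (∀ k ∈ Finset.Icc 1 r, ∫ ω, U ω ^ k ∂μ = ∫ ω, V ω ^ k ∂μ) :=
  stmt_17_general μ U V hindep hVg R hR hmgf r
end

section
/- For natural numbers m ≤ j, the classical Stirling number of the second kind satisfies S(j,m) = C(j,m) · E[(β_1 + ... + β_m)^{j-m}], where β_1, ..., β_m are independent random variables each uniformly distributed on [0,1]. -/
/-!
Both sides count the surjections `Fin j → Fin m`, divided by `m!`.

A surjection is the same as a partition of `Fin j` into `m` blocks together with a labelling of
the blocks by `Fin m`, so there are `m! S(j,m)` of them. Grouping the surjections instead by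
their fibre sizes `l` (positive, summing to `j`) gives `∑ₗ multinomial(l)`, since by
orbit–stabilizer for `Perm (Fin j)` there are `multinomial(l)` maps with fibre sizes `l`.

On the probabilistic side, the multinomial theorem, independence and `E[βᵏ] = 1/(k+1)` give
`E[(β₁ + ⋯ + β_m)ⁿ] = ∑_{|k| = n} multinomial(k) ∏ᵢ 1/(kᵢ+1)`, and with `l = k + 1` one has
`C(n+m, m) · m! · multinomial(k) / ∏ᵢ (kᵢ+1) = multinomial(l)`.
-/

open MeasureTheory ProbabilityTheory

def stirling (j m : ℕ) : ℕ :=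
  Fintype.card {P : Finpartition (Finset.univ : Finset (Fin j)) // P.parts.card = m}

open Finset Equiv MulAction

section FiberCard

variable {α ι : Type*} [Fintype α] [DecidableEq ι]

def fiberCard (f : α → ι) (i : ι) : ℕ := Fintype.card {a // f a = i}

lemma sum_fiberCard [Fintype ι] (f : α → ι) : ∑ i, fiberCard f i = Fintype.card α := by
  rw [← Fintype.card_congr (sigmaFiberEquiv f), Fintype.card_sigma]
  rfl

lemma fiberCard_ne_zero_iff {f : α → ι} {i : ι} : fiberCard f i ≠ 0 ↔ ∃ a, f a = i := by
  rw [fiberCard, Ne, Fintype.card_eq_zero_iff, not_isEmpty_iff, nonempty_subtype]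

lemma fiberCard_comp_perm (f : α → ι) (σ : Perm α) : fiberCard (f ∘ σ) = fiberCard f :=
  funext fun _ => Fintype.card_congr (σ.subtypeEquiv fun _ => Iff.rfl)

lemma exists_perm_comp_eq_of_fiberCard_eq {f g : α → ι} (h : fiberCard g = fiberCard f) :
    ∃ σ : Perm α, f ∘ σ = g := by
  have e (i : ι) : {a // g a = i} ≃ {a // f a = i} := Fintype.equivOfCardEq (congrFun h i)
  refine ⟨(sigmaFiberEquiv g).symm.trans ((sigmaCongrRight e).trans (sigmaFiberEquiv f)), ?_⟩
  funext a
  exact (e (g a) ⟨a, rfl⟩).2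

lemma orbit_domMulAct_perm_eq [DecidableEq α] (f : α → ι) :
    orbit (Perm α)ᵈᵐᵃ f = {g | fiberCard g = fiberCard f} := by
  ext g
  constructor
  · rintro ⟨σ, rfl⟩
    exact fiberCard_comp_perm f _
  · intro hg
    obtain ⟨σ, rfl⟩ := exists_perm_comp_eq_of_fiberCard_eq hg
    exact ⟨DomMulAct.mk σ, rfl⟩

lemma card_fiberCard_eq_mul_prod_factorial [DecidableEq α] [Fintype ι] (f : α → ι) :
    Nat.card {g : α → ι // fiberCard g = fiberCard f} * ∏ i, (fiberCard f i).factorial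
      = (Fintype.card α).factorial := by
  have hstab : Nat.card (stabilizer (Perm α)ᵈᵐᵃ f) = ∏ i, (fiberCard f i).factorial := by
    unfold fiberCard
    rw [← DomMulAct.stabilizer_card f, ← Nat.card_eq_fintype_card]
    exact Nat.card_congr (subtypeEquiv DomMulAct.mk.symm fun _ => DomMulAct.mem_stabilizer_iff)
  have horbit : Nat.card {g : α → ι // fiberCard g = fiberCard f}
      = Nat.card (orbit (Perm α)ᵈᵐᵃ f) := by
    rw [orbit_domMulAct_perm_eq]
    rfl
  rw [← hstab, horbit, ← Nat.card_prod, Nat.card_congr (orbitProdStabilizerEquivGroup _ f),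
    Nat.card_congr DomMulAct.mk.symm, Nat.card_perm, Nat.card_eq_fintype_card]

lemma card_fiberCard_eq_multinomial [DecidableEq α] [Fintype ι] (l : ι → ℕ)
    (hl : ∑ i, l i = Fintype.card α) :
    Nat.card {g : α → ι // fiberCard g = l} = Nat.multinomial univ l := by
  obtain ⟨e⟩ : Nonempty (α ≃ Σ i, Fin (l i)) := Fintype.card_eq.1 (by simp [hl])
  have hfiber : fiberCard (fun a => (e a).1) = l := funext fun i =>
    (Fintype.card_congr ((e.subtypeEquiv fun _ => Iff.rfl).trans (sigmaSubtype i))).trans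
      (Fintype.card_fin _)
  have h := card_fiberCard_eq_mul_prod_factorial fun a => (e a).1
  rw [hfiber, ← hl, ← Nat.multinomial_spec, mul_comm] at h
  exact Nat.eq_of_mul_eq_mul_left (prod_pos fun i _ => Nat.factorial_pos _) h

lemma sum_comp_fiberCard [DecidableEq α] [Fintype ι] {M : Type*} [AddCommMonoid M]
    (φ : (ι → ℕ) → M) :
    ∑ f : α → ι, φ (fiberCard f)
      = ∑ l ∈ piAntidiag univ (Fintype.card α), Nat.multinomial univ l • φ l := by
  rw [← sum_fiberwise_of_maps_to (g := fiberCard) (t := piAntidiag univ (Fintype.card α))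
    fun f _ => mem_piAntidiag.2 ⟨sum_fiberCard f, fun i _ => mem_univ i⟩]
  refine sum_congr rfl fun l hl => ?_
  rw [sum_congr rfl fun f hf => by rw [(mem_filter.1 hf).2], sum_const,
    ← card_fiberCard_eq_multinomial l (mem_piAntidiag.1 hl).1, Nat.card_eq_fintype_card,
    Fintype.card_subtype]

lemma card_surjective_eq_sum_multinomial [DecidableEq α] [Fintype ι] :
    Fintype.card {f : α → ι // Function.Surjective f}
      = ∑ l ∈ (piAntidiag (univ : Finset ι) (Fintype.card α)).filter (fun l => ∀ i, l i ≠ 0),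
          Nat.multinomial univ l := by
  have h := sum_comp_fiberCard (α := α) (M := ℕ) fun l : ι → ℕ => if ∀ i, l i ≠ 0 then 1 else 0
  simp only [smul_eq_mul, mul_ite, mul_one, mul_zero, ← sum_filter] at h
  rw [← h, Fintype.card_subtype, card_eq_sum_ones]
  exact sum_congr (filter_congr fun f _ => by simp only [fiberCard_ne_zero_iff]; rfl)
    fun _ _ => rfl

end FiberCard

namespace Finpartition

variable {α : Type*} [DecidableEq α]

lemma eq_of_part_eq {s : Finset α} {P Q : Finpartition s} (h : ∀ a ∈ s, P.part a = Q.part a) :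
    P = Q := by
  suffices key : ∀ P Q : Finpartition s, (∀ a ∈ s, P.part a = Q.part a) → P.parts ⊆ Q.parts from
    Finpartition.ext (subset_antisymm (key P Q h) (key Q P fun a ha => (h a ha).symm))
  intro P Q h t ht
  obtain ⟨a, hat⟩ := P.nonempty_of_mem_parts ht
  have ha : a ∈ s := P.le ht hat
  rw [← P.part_eq_of_mem ht hat, h a ha]
  exact Q.part_mem.2 ha

variable [Fintype α] {ι : Type*} {P : Finpartition (univ : Finset α)}

def label (P : Finpartition (univ : Finset α)) (e : P.parts ≃ ι) (a : α) : ι :=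
  e ⟨P.part a, P.part_mem.2 (mem_univ a)⟩

lemma label_eq_iff (e : P.parts ≃ ι) {a : α} {q : P.parts} : P.label e a = e q ↔ a ∈ q.1 := by
  rw [label, e.apply_eq_iff_eq, Subtype.ext_iff, P.part_eq_iff_mem q.2]

lemma label_surjective (e : P.parts ≃ ι) : Function.Surjective (P.label e) := fun i => by
  obtain ⟨a, ha⟩ := P.nonempty_of_mem_parts (e.symm i).2
  exact ⟨a, by rw [← e.apply_symm_apply i, label_eq_iff]; exact ha⟩

lemma label_injective : Function.Injective (P.label (ι := ι)) := fun e e' h =>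
  Equiv.ext fun q => by
    obtain ⟨a, ha⟩ := P.nonempty_of_mem_parts q.2
    rw [← (label_eq_iff e).2 ha, ← (label_eq_iff e').2 ha, h]

variable [DecidableEq ι]

def fibers (f : α → ι) : Finpartition (univ : Finset α) := ofSetoid (Setoid.ker f)

lemma part_fibers (f : α → ι) (a : α) : (fibers f).part a = ({b | f b = f a} : Finset α) := by
  ext b
  rw [fibers, mem_part_ofSetoid_iff_rel, mem_filter, Setoid.ker_def]
  simp [eq_comm]

lemma filter_eq_mem_parts_fibers (f : α → ι) (a : α) :
    ({b | f b = f a} : Finset α) ∈ (fibers f).parts :=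
  part_fibers f a ▸ (fibers f).part_mem.2 (mem_univ a)

variable {f : α → ι}

noncomputable def fibersEquiv (hf : Function.Surjective f) : ι ≃ (fibers f).parts :=
  Equiv.ofBijective
    (fun i => ⟨({a | f a = i} : Finset α), by
      obtain ⟨a, rfl⟩ := hf i
      exact filter_eq_mem_parts_fibers f a⟩)
    ⟨fun i i' h => by
      obtain ⟨a, rfl⟩ := hf i
      simpa using Finset.ext_iff.1 (congrArg Subtype.val h) a,
    fun ⟨p, hp⟩ => by
      obtain ⟨a, -, rfl⟩ := (fibers f).part_surjOn hp
      exact ⟨f a, Subtype.ext (part_fibers f a).symm⟩⟩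

lemma card_parts_fibers [Fintype ι] (hf : Function.Surjective f) :
    #(fibers f).parts = Fintype.card ι := by
  rw [← Fintype.card_coe, Fintype.card_congr (fibersEquiv hf).symm]

lemma fibers_label (e : P.parts ≃ ι) : fibers (P.label e) = P :=
  eq_of_part_eq fun a _ => by
    ext b
    rw [part_fibers, mem_filter]
    exact (and_iff_right (mem_univ b)).trans (label_eq_iff e (q := ⟨P.part a, _⟩))

lemma label_fibersEquiv_symm (hf : Function.Surjective f) :
    (fibers f).label (fibersEquiv hf).symm = f :=
  funext fun a => (fibersEquiv hf).symm_apply_eq.2 (Subtype.ext (part_fibers f a))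

lemma filter_surjective_fibers_eq_image_label [Fintype ι] (P : Finpartition (univ : Finset α)) :
    ({f | Function.Surjective f ∧ fibers f = P} : Finset (α → ι)) = univ.image P.label := by
  ext f
  simp only [mem_filter, mem_univ, true_and, mem_image]
  constructor
  · rintro ⟨hf, rfl⟩
    exact ⟨_, label_fibersEquiv_symm hf⟩
  · rintro ⟨e, rfl⟩
    exact ⟨label_surjective e, fibers_label e⟩

lemma card_filter_surjective_fibers_eq [Fintype ι] (hP : #P.parts = Fintype.card ι) :
    #({f | Function.Surjective f ∧ fibers f = P} : Finset (α → ι))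
      = (Fintype.card ι).factorial := by
  rw [← Fintype.card_coe] at hP
  rw [filter_surjective_fibers_eq_image_label, card_image_of_injective _ label_injective,
    card_univ, Fintype.card_equiv (Fintype.equivOfCardEq hP), hP]

end Finpartition

open Finpartition in
lemma card_surjective_eq_factorial_mul_card_finpartition {α ι : Type*} [Fintype α]
    [DecidableEq α] [Fintype ι] [DecidableEq ι] :
    Fintype.card {f : α → ι // Function.Surjective f}
      = (Fintype.card ι).factorial
        * Fintype.card {P : Finpartition (univ : Finset α) // #P.parts = Fintype.card ι} := by
  rw [Fintype.card_subtype, card_eq_sum_card_fiberwise (f := fibers)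
      (t := {P | #P.parts = Fintype.card ι}) fun f hf =>
      mem_filter.2 ⟨mem_univ _, card_parts_fibers (mem_filter.1 hf).2⟩]
  simp only [filter_filter]
  rw [sum_congr rfl fun P hP => card_filter_surjective_fibers_eq (mem_filter.1 hP).2,
    sum_const, smul_eq_mul, mul_comm, Fintype.card_subtype]

section UniformMoments

variable {Ω : Type*} [MeasurableSpace Ω] {μ : Measure Ω} {X : Ω → ℝ}

lemma aemeasurable_of_map_eq_uniform (hX : μ.map X = volume.restrict (Set.Icc (0 : ℝ) 1)) :
    AEMeasurable X μ :=
  AEMeasurable.of_map_ne_zero <| hX ▸ by simp [Measure.restrict_eq_zero]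

lemma ae_mem_Icc_of_map_eq_uniform (hX : μ.map X = volume.restrict (Set.Icc (0 : ℝ) 1)) :
    ∀ᵐ ω ∂μ, X ω ∈ Set.Icc 0 1 :=
  ae_of_ae_map (aemeasurable_of_map_eq_uniform hX) (hX ▸ ae_restrict_mem measurableSet_Icc)

lemma integral_pow_of_map_eq_uniform (hX : μ.map X = volume.restrict (Set.Icc (0 : ℝ) 1))
    (k : ℕ) : ∫ ω, X ω ^ k ∂μ = ((k : ℝ) + 1)⁻¹ := by
  rw [← integral_map (aemeasurable_of_map_eq_uniform hX) (continuous_pow k).aestronglyMeasurable,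
    hX, integral_Icc_eq_integral_Ioc, ← intervalIntegral.integral_of_le zero_le_one,
    integral_pow]
  simp

lemma integral_sum_pow_of_uniform {ι : Type*} [Fintype ι] [DecidableEq ι] {β : ι → Ω → ℝ}
    (hindep : iIndepFun β μ) (hunif : ∀ i, μ.map (β i) = volume.restrict (Set.Icc (0 : ℝ) 1))
    (n : ℕ) :
    ∫ ω, (∑ i, β i ω) ^ n ∂μ
      = ∑ k ∈ piAntidiag (univ : Finset ι) n,
          (Nat.multinomial univ k : ℝ) * ∏ i, ((k i : ℝ) + 1)⁻¹ := by
  have := hindep.isProbabilityMeasure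
  have hmeas i := aemeasurable_of_map_eq_uniform (hunif i)
  have hint (k : ι → ℕ) : Integrable (fun ω => ∏ i, β i ω ^ k i) μ := by
    refine Integrable.of_mem_Icc 0 1 (by fun_prop) ?_
    filter_upwards [ae_all_iff.2 fun i => ae_mem_Icc_of_map_eq_uniform (hunif i)] with ω hω
    exact ⟨prod_nonneg fun i _ => pow_nonneg (hω i).1 _,
      prod_le_one (fun i _ => pow_nonneg (hω i).1 _) fun i _ => pow_le_one₀ (hω i).1 (hω i).2⟩
  simp_rw [sum_pow_eq_sum_piAntidiag]
  rw [integral_finsetSum _ fun k _ => (hint k).const_mul _]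
  refine sum_congr rfl fun k _ => ?_
  rw [integral_const_mul, hindep.integral_fun_prod_comp (f := fun i x => x ^ k i) hmeas
    fun i => (continuous_pow _).aestronglyMeasurable]
  simp_rw [integral_pow_of_map_eq_uniform (hunif _)]

end UniformMoments

section Reindexing

variable {ι : Type*} [Fintype ι]

lemma choose_mul_factorial_mul_multinomial (k : ι → ℕ) :
    (Fintype.card ι + ∑ i, k i).choose (Fintype.card ι) * (Fintype.card ι).factorial
        * Nat.multinomial univ k
      = Nat.multinomial univ (k + 1) * ∏ i, (k i + 1) := by
  refine Nat.eq_of_mul_eq_mul_right (prod_pos (s := univ) fun i _ => Nat.factorial_pos (k i)) ?_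
  have hsum : ∑ i, (k + 1) i = Fintype.card ι + ∑ i, k i := by
    simp [sum_add_distrib, add_comm]
  calc _ = (Fintype.card ι + ∑ i, k i).choose (Fintype.card ι) * (Fintype.card ι).factorial
        * ((∏ i, (k i).factorial) * Nat.multinomial univ k) := by ring
    _ = (Fintype.card ι + ∑ i, k i).factorial := by
      rw [Nat.multinomial_spec, mul_right_comm, add_comm,
        Nat.add_choose_mul_factorial_mul_factorial]
    _ = (∏ i, ((k + 1) i).factorial) * Nat.multinomial univ (k + 1) := by
      rw [Nat.multinomial_spec, hsum]
    _ = _ := by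
      simp only [Pi.add_apply, Pi.one_apply, Nat.factorial_succ, prod_mul_distrib]
      ring

variable [DecidableEq ι]

lemma sum_piAntidiag_filter_ne_zero_eq_sum_add_one {M : Type*} [AddCommMonoid M]
    (g : (ι → ℕ) → M) (n : ℕ) :
    ∑ l ∈ (piAntidiag univ (Fintype.card ι + n)).filter (fun l => ∀ i, l i ≠ 0), g l
      = ∑ k ∈ piAntidiag univ n, g (k + 1) := by
  have hsum (k : ι → ℕ) : univ.sum (k + 1) = Fintype.card ι + univ.sum k := by
    simp [sum_add_distrib, add_comm]
  have hsub {l : ι → ℕ} (hl : ∀ i, l i ≠ 0) : l - 1 + 1 = l :=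
    funext fun i => Nat.sub_add_cancel (Nat.one_le_iff_ne_zero.2 (hl i))
  refine (sum_nbij' (· + 1) (· - 1) (fun k hk => ?_) (fun l hl => ?_) (fun k _ => ?_)
    (fun l hl => hsub (mem_filter.1 hl).2) fun _ _ => rfl).symm
  · simp_all [mem_piAntidiag]
  · simp only [mem_filter, mem_piAntidiag, mem_univ, implies_true, and_true] at hl ⊢
    have := hsum (l - 1)
    rw [hsub hl.2, hl.1] at this
    omega
  · simp

lemma choose_mul_sum_multinomial_mul_prod_inv (n : ℕ) :
    ((Fintype.card ι + n).choose (Fintype.card ι) : ℝ)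
        * ∑ k ∈ piAntidiag (univ : Finset ι) n,
            (Nat.multinomial univ k : ℝ) * ∏ i, ((k i : ℝ) + 1)⁻¹
      = (∑ l ∈ (piAntidiag (univ : Finset ι) (Fintype.card ι + n)).filter
            (fun l => ∀ i, l i ≠ 0), Nat.multinomial univ l : ℕ)
          / (Fintype.card ι).factorial := by
  rw [sum_piAntidiag_filter_ne_zero_eq_sum_add_one, Nat.cast_sum, sum_div, mul_sum]
  refine sum_congr rfl fun k hk => ?_
  rw [eq_div_iff (by positivity), ← (mem_piAntidiag.1 hk).1, prod_inv_distrib]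
  have h := congrArg (Nat.cast : ℕ → ℝ) (choose_mul_factorial_mul_multinomial k)
  push_cast at h
  field_simp
  linear_combination h

end Reindexing

theorem stmt_19_general {Ω : Type*} [MeasurableSpace Ω] (μ : Measure Ω)
    (j m : ℕ) (hmj : m ≤ j)
    (β : Fin m → Ω → ℝ)
    (hindep : iIndepFun β μ)
    (hunif : ∀ i, μ.map (β i) = MeasureTheory.volume.restrict (Set.Icc (0 : ℝ) 1)) :
    (stirling j m : ℝ)
      = (j.choose m : ℝ) * ∫ ω, (∑ i, β i ω) ^ (j - m) ∂μ := by
  obtain ⟨n, rfl⟩ := Nat.exists_eq_add_of_le hmj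
  have hsurj := card_surjective_eq_factorial_mul_card_finpartition (α := Fin (m + n)) (ι := Fin m)
  have hmoment := choose_mul_sum_multinomial_mul_prod_inv (ι := Fin m) n
  rw [card_surjective_eq_sum_multinomial] at hsurj
  simp only [Fintype.card_fin] at hsurj hmoment
  rw [integral_sum_pow_of_uniform hindep hunif, Nat.add_sub_cancel_left, hmoment, hsurj, stirling]
  push_cast
  field_simp

/-- Sun's probabilistic representation: for `m ≤ j`,
`S(j,m) = C(j,m) · E[(β₁ + ⋯ + β_m)^{j-m}]`, where `β₁,…,β_m` are i.i.d. uniform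
random variables on `[0,1]`. -/
theorem stmt_19 {Ω : Type*} [MeasurableSpace Ω] (μ : Measure Ω) [IsProbabilityMeasure μ]
    (j m : ℕ) (hmj : m ≤ j)
    (β : Fin m → Ω → ℝ) (hmeas : ∀ i, Measurable (β i))
    (hindep : iIndepFun β μ)
    (hunif : ∀ i, μ.map (β i) = MeasureTheory.volume.restrict (Set.Icc (0 : ℝ) 1)) :
    (stirling j m : ℝ)
      = (j.choose m : ℝ) * ∫ ω, (∑ i, β i ω) ^ (j - m) ∂μ :=
  stmt_19_general μ j m hmj β hindep hunif
end
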